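/- arXiv:2405.18157 — 5 statements merged into one kernel-verified Lean document; each statement's English description precedes it below -/
import Mathlib

section
/- Let a : ℕ → ℂ be a bounded arithmetic function whose average is invariant under multiplications, with average A, and let S be a finite set of prime numbers. Then lim_{N→∞} (1/N) · Σ_{n ≤ N, n squarefree, p ∤ n for all p ∈ S} a(n) = (∏_{p∈S} p/(p+1)) · (6/π²) · A. -/
open Filter Topology Finset
open scoped Classical

open ArithmeticFunction
open scoped ArithmeticFunction.Moebius

lemma moebius_sq_sum (n : ℕ) (hn : n ≠ 0) :
    ∑ d ∈ n.divisors.filter (fun d => d ^ 2 ∣ n), (μ d : ℤ)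
      = if Squarefree n then 1 else 0 := by
  by_cases hsf : Squarefree n
  · rw [if_pos hsf]
    have hset : n.divisors.filter (fun d => d ^ 2 ∣ n) = {1} := by
      ext d
      simp only [Finset.mem_filter, Nat.mem_divisors, Finset.mem_singleton]
      constructor
      · rintro ⟨⟨hd, _⟩, hd2⟩
        exact Nat.isUnit_iff.mp (hsf d (by rwa [← sq]))
      · rintro rfl; simp [hn]
    rw [hset]; simp
  · rw [if_neg hsf]
    obtain ⟨p, hp, hpp⟩ : ∃ p, p.Prime ∧ p * p ∣ n := by
      by_contra h
      push_neg at h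
      exact hsf (Nat.squarefree_iff_prime_squarefree.mpr h)
    rw [← Finset.sum_filter_add_sum_filter_not _ (fun d => Squarefree d)]
    have h2 : ∑ d ∈ (n.divisors.filter (fun d => d ^ 2 ∣ n)).filter
        (fun d => ¬ Squarefree d), (μ d : ℤ) = 0 :=
      Finset.sum_eq_zero fun d hd =>
        moebius_eq_zero_of_not_squarefree (Finset.mem_filter.mp hd).2
    rw [h2, add_zero]
    set T := (n.divisors.filter (fun d => d ^ 2 ∣ n)).filter Squarefree with hT
    have hmemT : ∀ d, d ∈ T ↔ (d ∣ n ∧ d ^ 2 ∣ n ∧ Squarefree d) := by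
      intro d
      simp only [hT, Finset.mem_filter, Nat.mem_divisors]
      tauto
    have hsq_n : p ^ 2 ∣ n := by rwa [sq]
    refine Finset.sum_involution
      (fun d _ => if p ∣ d then d / p else d * p) ?_ ?_ ?_ ?_
    · intro d hd
      rw [hmemT] at hd
      obtain ⟨hdn, hd2, hdsf⟩ := hd
      show (μ d : ℤ) + (μ (if p ∣ d then d / p else d * p) : ℤ) = 0
      by_cases hpd : p ∣ d
      · rw [if_pos hpd]
        obtain ⟨e, rfl⟩ := hpd
        have hpe : ¬ p ∣ e := fun he => by
          obtain ⟨f, rfl⟩ := he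
          exact hp.not_isUnit (hdsf p ⟨f, by ring⟩)
        rw [Nat.mul_div_cancel_left _ hp.pos]
        have hcop : p.Coprime e := (Nat.Prime.coprime_iff_not_dvd hp).mpr hpe
        rw [isMultiplicative_moebius.map_mul_of_coprime hcop, moebius_apply_prime hp]
        ring
      · rw [if_neg hpd]
        have hcop : d.Coprime p := Nat.Coprime.symm ((Nat.Prime.coprime_iff_not_dvd hp).mpr hpd)
        rw [isMultiplicative_moebius.map_mul_of_coprime hcop, moebius_apply_prime hp]
        ring
    · intro d hd hne
      rw [hmemT] at hd
      have hd0 : 0 < d := Nat.pos_of_ne_zero fun h => hn (by simpa [h] using hd.1)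
      show (if p ∣ d then d / p else d * p) ≠ d
      by_cases hpd : p ∣ d
      · rw [if_pos hpd]
        exact Nat.ne_of_lt (Nat.div_lt_self hd0 hp.one_lt)
      · rw [if_neg hpd]
        exact Nat.ne_of_gt ((Nat.lt_mul_iff_one_lt_right hd0).mpr hp.one_lt)
    · intro d hd
      rw [hmemT] at hd
      obtain ⟨hdn, hd2, hdsf⟩ := hd
      show (if p ∣ d then d / p else d * p) ∈ T
      rw [hmemT]
      by_cases hpd : p ∣ d
      · rw [if_pos hpd]
        have hdp : d / p ∣ d := Nat.div_dvd_of_dvd hpd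
        exact ⟨hdp.trans hdn, (pow_dvd_pow_of_dvd hdp 2).trans hd2, hdsf.squarefree_of_dvd hdp⟩
      · rw [if_neg hpd]
        have hcop : d.Coprime p := Nat.Coprime.symm ((Nat.Prime.coprime_iff_not_dvd hp).mpr hpd)
        have hsq : (d * p) ^ 2 ∣ n := by
          rw [mul_pow]
          exact (Nat.Coprime.pow 2 2 hcop).mul_dvd_of_dvd_of_dvd hd2 hsq_n
        refine ⟨(dvd_pow_self (d * p) two_ne_zero).trans hsq, hsq, ?_⟩
        exact Nat.squarefree_mul_iff.mpr ⟨hcop, hdsf, hp.prime.squarefree⟩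
    · intro d hd
      rw [hmemT] at hd
      show (if p ∣ (if p ∣ d then d / p else d * p) then (if p ∣ d then d / p else d * p) / p
        else (if p ∣ d then d / p else d * p) * p) = d
      by_cases hpd : p ∣ d
      · simp only [if_pos hpd]
        have hnd : ¬ p ∣ d / p := by
          intro hc
          obtain ⟨e, rfl⟩ := hpd
          rw [Nat.mul_div_cancel_left _ hp.pos] at hc
          obtain ⟨f, rfl⟩ := hc
          exact hp.not_isUnit (hd.2.2 p ⟨f, by ring⟩)
        rw [if_neg hnd, Nat.div_mul_cancel hpd]
      · simp only [if_neg hpd]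
        rw [if_pos (dvd_mul_left p d), Nat.mul_div_cancel _ hp.pos]

/-- Moore–Osgood style approximation lemma. -/
lemma approx_tendsto {f : ℕ → ℂ} {L : ℂ}
    (h : ∀ ε : ℝ, 0 < ε → ∃ (g : ℕ → ℂ) (L' : ℂ),
      Tendsto g atTop (nhds L') ∧ (∀ᶠ N in atTop, ‖f N - g N‖ ≤ ε) ∧ ‖L' - L‖ ≤ ε) :
    Tendsto f atTop (nhds L) := by
  rw [Metric.tendsto_atTop]
  intro ε hε
  obtain ⟨g, L', hg, hfg, hL⟩ := h (ε/4) (by linarith)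
  have hg' : ∀ᶠ N in atTop, ‖g N - L'‖ < ε/4 := by
    have := Metric.tendsto_atTop.mp hg (ε/4) (by linarith)
    obtain ⟨N₀, hN₀⟩ := this
    filter_upwards [eventually_ge_atTop N₀] with N hN
    simpa [dist_eq_norm] using hN₀ N hN
  obtain ⟨N₁, hN₁⟩ := (hfg.and hg').exists_forall_of_atTop
  exact ⟨N₁, fun N hN => by
    have h1 := (hN₁ N hN).1
    have h2 := (hN₁ N hN).2
    rw [dist_eq_norm]
    calc ‖f N - L‖ = ‖(f N - g N) + (g N - L') + (L' - L)‖ := by ring_nf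
      _ ≤ ‖(f N - g N) + (g N - L')‖ + ‖L' - L‖ := norm_add_le _ _
      _ ≤ ‖f N - g N‖ + ‖g N - L'‖ + ‖L' - L‖ := by
          have := norm_add_le (f N - g N) (g N - L'); linarith
      _ < ε := by linarith⟩

lemma floor_div_ratio_tendsto_real (q : ℕ) (hq : 0 < q) :
    Tendsto (fun N : ℕ => ((N / q : ℕ) : ℝ) * (N : ℝ)⁻¹) atTop (nhds ((q : ℝ)⁻¹)) := by
  have hlow : Tendsto (fun N : ℕ => (q:ℝ)⁻¹ - (N:ℝ)⁻¹) atTop (nhds ((q:ℝ)⁻¹)) := by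
    simpa using tendsto_const_nhds.sub (tendsto_inv_atTop_nhds_zero_nat (𝕜 := ℝ))
  refine tendsto_of_tendsto_of_tendsto_of_le_of_le' hlow tendsto_const_nhds ?_ ?_ <;>
    · filter_upwards [eventually_ge_atTop 1] with N hN
      have hmod := Nat.div_add_mod N q
      have hmodlt := Nat.mod_lt N hq
      have hN' : (0:ℝ) < N := by exact_mod_cast hN
      have hq' : (0:ℝ) < q := by exact_mod_cast hq
      have h1 : (q:ℝ) * ((N / q : ℕ) : ℝ) + ((N % q : ℕ) : ℝ) = (N:ℝ) := by exact_mod_cast hmod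
      have h2 : ((N % q : ℕ) : ℝ) < q := by exact_mod_cast hmodlt
      have h3 : (0:ℝ) ≤ ((N % q : ℕ) : ℝ) := by positivity
      rw [← sub_nonneg]
      field_simp
      nlinarith

lemma floor_div_ratio_tendsto (q : ℕ) (hq : 0 < q)
    (hre : Tendsto (fun N : ℕ => ((N / q : ℕ) : ℝ) * (N : ℝ)⁻¹) atTop (nhds ((q : ℝ)⁻¹))) :
    Tendsto (fun N : ℕ => ((N / q : ℕ) : ℂ) * (N : ℂ)⁻¹) atTop (nhds ((q : ℂ)⁻¹)) := by
  have h := (Complex.continuous_ofReal.tendsto _).comp hre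
  have : (fun N : ℕ => ((((N / q : ℕ) : ℝ) * (N : ℝ)⁻¹ : ℝ) : ℂ))
      = fun N : ℕ => ((N / q : ℕ) : ℂ) * (N : ℂ)⁻¹ := by
    funext N; push_cast; ring
  rw [← this]
  convert h using 1
  · rfl
  · rw [Complex.ofReal_inv, Complex.ofReal_natCast]

lemma div_floor_limit (g : ℕ → ℂ) (c : ℂ) (q : ℕ) (hq : 0 < q)
    (hfd : Tendsto (fun N : ℕ => ((N / q : ℕ) : ℂ) * (N : ℂ)⁻¹) atTop (nhds ((q : ℂ)⁻¹)))
    (h : Tendsto (fun K : ℕ => (K : ℂ)⁻¹ * g K) atTop (nhds c)) :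
    Tendsto (fun N : ℕ => (N : ℂ)⁻¹ * g (N / q)) atTop (nhds ((q : ℂ)⁻¹ * c)) := by
  have hdivtop : Tendsto (fun N : ℕ => N / q) atTop atTop := by
    apply tendsto_atTop_atTop.mpr
    intro b
    exact ⟨b * q, fun N hN => Nat.le_div_iff_mul_le hq |>.mpr hN⟩
  have h2 : Tendsto (fun N : ℕ => ((N / q : ℕ) : ℂ)⁻¹ * g (N / q)) atTop (nhds c) :=
    h.comp hdivtop
  have h3 := hfd.mul h2
  have heq : ∀ᶠ N : ℕ in atTop, ((N / q : ℕ) : ℂ) * (N : ℂ)⁻¹ *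
      (((N / q : ℕ) : ℂ)⁻¹ * g (N / q)) = (N : ℂ)⁻¹ * g (N / q) := by
    filter_upwards [eventually_ge_atTop q] with N hN
    have h0 : (N / q : ℕ) ≠ 0 := Nat.div_ne_zero_iff.mpr ⟨hq.ne', hN⟩
    have h0' : ((N / q : ℕ) : ℂ) ≠ 0 := Nat.cast_ne_zero.mpr h0
    rw [mul_comm ((N / q : ℕ) : ℂ) ((N:ℂ)⁻¹), mul_assoc, ← mul_assoc ((N / q : ℕ) : ℂ),
      mul_inv_cancel₀ h0', one_mul]
  exact Tendsto.congr' heq h3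

lemma floor_div_ratio_tendsto' (q : ℕ) (hq : 0 < q) :
    Tendsto (fun N : ℕ => ((N / q : ℕ) : ℂ) * (N : ℂ)⁻¹) atTop (nhds ((q : ℂ)⁻¹)) :=
  floor_div_ratio_tendsto q hq (floor_div_ratio_tendsto_real q hq)

lemma div_floor_limit' (g : ℕ → ℂ) (c : ℂ) (q : ℕ) (hq : 0 < q)
    (h : Tendsto (fun K : ℕ => (K : ℂ)⁻¹ * g K) atTop (nhds c)) :
    Tendsto (fun N : ℕ => (N : ℂ)⁻¹ * g (N / q)) atTop (nhds ((q : ℂ)⁻¹ * c)) :=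
  div_floor_limit g c q hq (floor_div_ratio_tendsto' q hq) h

lemma sum_multiples (L N : ℕ) (hL : 0 < L) (F : ℕ → ℂ) :
    ∑ n ∈ (Finset.Icc 1 N).filter (fun n => L ∣ n), F n
      = ∑ m ∈ Finset.Icc 1 (N / L), F (L * m) := by
  refine Finset.sum_nbij' (fun n => n / L) (fun m => L * m) ?_ ?_ ?_ ?_ ?_
  · intro n hn
    simp only [Finset.mem_filter, Finset.mem_Icc] at hn ⊢
    obtain ⟨⟨h1, h2⟩, hd⟩ := hn
    exact ⟨(Nat.one_le_div_iff hL).mpr (Nat.le_of_dvd (by omega) hd), Nat.div_le_div_right h2⟩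
  · intro m hm
    simp only [Finset.mem_Icc] at hm
    simp only [Finset.mem_filter, Finset.mem_Icc]
    have h2 : m * L ≤ N := (Nat.le_div_iff_mul_le hL).mp hm.2
    exact ⟨⟨Nat.mul_pos hL hm.1, by rw [mul_comm]; exact h2⟩, Dvd.intro m rfl⟩
  · intro n hn
    exact Nat.mul_div_cancel' (Finset.mem_filter.mp hn).2
  · intro m hm
    exact Nat.mul_div_cancel_left m hL
  · intro n hn
    rw [Nat.mul_div_cancel' (Finset.mem_filter.mp hn).2]

lemma base_identity (a : ℕ → ℂ) (N : ℕ) :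
    ∑ d ∈ Finset.Icc 1 N, (μ d : ℂ) * ∑ m ∈ Finset.Icc 1 (N / d ^ 2), a (d ^ 2 * m)
      = ∑ n ∈ (Finset.Icc 1 N).filter (fun n => Squarefree n), a n := by
  have step1 : ∀ d ∈ Finset.Icc 1 N,
      (μ d : ℂ) * ∑ m ∈ Finset.Icc 1 (N / d ^ 2), a (d ^ 2 * m)
        = ∑ n ∈ Finset.Icc 1 N, if d ^ 2 ∣ n then (μ d : ℂ) * a n else 0 := by
    intro d hd
    have hd0 : 0 < d ^ 2 := by
      simp only [Finset.mem_Icc] at hd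
      exact pow_pos hd.1 2
    rw [← sum_multiples _ _ hd0 a, Finset.sum_filter, Finset.mul_sum]
    simp only [mul_ite, mul_zero]
  rw [Finset.sum_congr rfl step1, Finset.sum_comm]
  have step2 : ∀ n ∈ Finset.Icc 1 N,
      (∑ d ∈ Finset.Icc 1 N, if d ^ 2 ∣ n then (μ d : ℂ) * a n else 0)
        = (if Squarefree n then a n else 0) := by
    intro n hn
    simp only [Finset.mem_Icc] at hn
    have hn0 : n ≠ 0 := by omega
    have hfe : (Finset.Icc 1 N).filter (fun d => d ^ 2 ∣ n)
        = n.divisors.filter (fun d => d ^ 2 ∣ n) := by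
      ext d
      simp only [Finset.mem_filter, Finset.mem_Icc, Nat.mem_divisors]
      constructor
      · rintro ⟨⟨h1, h2⟩, hd⟩
        exact ⟨⟨(dvd_pow_self d two_ne_zero).trans hd, hn0⟩, hd⟩
      · rintro ⟨⟨hdn, _⟩, hd⟩
        have hd0 : d ≠ 0 := fun h => hn0 (by simpa [h] using hdn)
        exact ⟨⟨Nat.one_le_iff_ne_zero.mpr hd0, (Nat.le_of_dvd (by omega) hdn).trans hn.2⟩, hd⟩
    have := moebius_sq_sum n hn0
    calc (∑ d ∈ Finset.Icc 1 N, if d ^ 2 ∣ n then (μ d : ℂ) * a n else 0)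
        = (∑ d ∈ (Finset.Icc 1 N).filter (fun d => d ^ 2 ∣ n), (μ d : ℂ)) * a n := by
          rw [← Finset.sum_filter, Finset.sum_mul]
      _ = ((if Squarefree n then (1:ℤ) else 0 : ℤ) : ℂ) * a n := by
          rw [hfe]
          congr 1
          rw [← Int.cast_sum, this]
      _ = (if Squarefree n then a n else 0) := by
          split <;> simp
  rw [Finset.sum_congr rfl step2, ← Finset.sum_filter]

lemma moebius_partial_sum :
    Tendsto (fun D : ℕ => ∑ d ∈ Finset.Icc 1 D, (μ d : ℂ) * ((d : ℂ) ^ 2)⁻¹)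
      atTop (nhds ((6 / Real.pi ^ 2 : ℝ) : ℂ)) := by
  have hs : (1:ℝ) < (2:ℂ).re := by norm_num
  have hsummable : LSeriesSummable (fun n => (μ n : ℂ)) 2 :=
    ArithmeticFunction.LSeriesSummable_moebius_iff.mpr hs
  have hpi2 : ((Real.pi : ℂ)) ^ 2 ≠ 0 :=
    pow_ne_zero 2 (Complex.ofReal_ne_zero.mpr Real.pi_ne_zero)
  have hval : LSeries (fun n => (μ n : ℂ)) 2 = ((6 / Real.pi ^ 2 : ℝ) : ℂ) := by
    have h1 := LSeries_one_mul_Lseries_moebius hs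
    rw [LSeries_one_eq_riemannZeta hs, riemannZeta_two] at h1
    push_cast
    rw [eq_div_iff hpi2]
    linear_combination 6 * h1
  have htsum := hsummable.hasSum.tendsto_sum_nat
  rw [show (∑' (b : ℕ), LSeries.term (fun n => (μ n : ℂ)) 2 b)
      = LSeries (fun n => (μ n : ℂ)) 2 from rfl, hval] at htsum
  have hshift : Tendsto (fun D : ℕ => ∑ n ∈ Finset.range (D + 1),
      LSeries.term (fun n => (μ n : ℂ)) 2 n) atTop (nhds ((6 / Real.pi ^ 2 : ℝ) : ℂ)) :=
    htsum.comp (tendsto_add_atTop_nat 1)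
  refine hshift.congr fun D => ?_
  rw [Finset.range_eq_Ico, Finset.sum_eq_sum_Ico_succ_bot (by omega : 0 < D + 1),
    LSeries.term_zero, zero_add, Finset.Ico_add_one_right_eq_Icc]
  refine Finset.sum_congr rfl fun n hn => ?_
  have hn0 : n ≠ 0 := by
    simp only [Finset.mem_Icc] at hn; omega
  rw [LSeries.term_of_ne_zero hn0, show (2:ℂ) = ((2:ℕ):ℂ) by norm_num,
    Complex.cpow_natCast, div_eq_mul_inv]

lemma norm_moebius_le_one (d : ℕ) : ‖(μ d : ℂ)‖ ≤ 1 := by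
  by_cases h : Squarefree d
  · rw [moebius_apply_of_squarefree h]
    push_cast
    rw [norm_pow, norm_neg, norm_one, one_pow]
  · simp [moebius_eq_zero_of_not_squarefree h]

lemma avg_norm_bound (a : ℕ → ℂ) (M : ℝ) (hbd : ∀ n, ‖a n‖ ≤ M)
    (f : ℕ → ℕ) (s : Finset ℕ) (N : ℕ) :
    ‖(N : ℂ)⁻¹ * ∑ m ∈ s, a (f m)‖ ≤ M * s.card / N := by
  rw [norm_mul, norm_inv, Complex.norm_natCast, div_eq_mul_inv, mul_comm ((N:ℝ))⁻¹]
  have hsum : ‖∑ m ∈ s, a (f m)‖ ≤ M * s.card := by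
    calc ‖∑ m ∈ s, a (f m)‖ ≤ ∑ m ∈ s, ‖a (f m)‖ := norm_sum_le _ _
      _ ≤ ∑ _m ∈ s, M := Finset.sum_le_sum fun m _ => hbd (f m)
      _ = M * s.card := by rw [Finset.sum_const, nsmul_eq_mul, mul_comm]
  exact mul_le_mul_of_nonneg_right hsum (by positivity)

lemma base_case (a : ℕ → ℂ) (M : ℝ) (hbd : ∀ n, ‖a n‖ ≤ M) (A : ℂ)
    (hinv : ∀ m : ℕ, 0 < m →
      Tendsto (fun N : ℕ => (N : ℂ)⁻¹ * ∑ n ∈ Finset.Icc 1 N, a (m * n))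
        atTop (nhds A)) :
    Tendsto (fun N : ℕ => (N : ℂ)⁻¹ *
        ∑ n ∈ (Finset.Icc 1 N).filter (fun n => Squarefree n), a n)
      atTop (nhds (((6 / Real.pi ^ 2 : ℝ) : ℂ) * A)) := by
  have hM0 : 0 ≤ M := le_trans (norm_nonneg _) (hbd 0)
  apply approx_tendsto
  intro ε hε
  -- choose D
  have h1 : ∀ᶠ D : ℕ in atTop,
      ‖(∑ d ∈ Finset.Icc 1 D, (μ d : ℂ) * ((d : ℂ) ^ 2)⁻¹) - ((6 / Real.pi ^ 2 : ℝ) : ℂ)‖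
        ≤ ε / (‖A‖ + 1) := by
    have := Metric.tendsto_atTop.mp moebius_partial_sum (ε / (‖A‖ + 1))
      (by positivity)
    obtain ⟨N₀, hN₀⟩ := this
    filter_upwards [eventually_ge_atTop N₀] with D hD
    have := hN₀ D hD
    rw [dist_eq_norm] at this
    exact this.le
  have h2 : ∀ᶠ D : ℕ in atTop, M * (D : ℝ)⁻¹ ≤ ε := by
    have : Tendsto (fun D : ℕ => M * (D:ℝ)⁻¹) atTop (nhds 0) := by
      simpa using tendsto_const_nhds.mul (tendsto_inv_atTop_nhds_zero_nat (𝕜 := ℝ))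
    filter_upwards [this.eventually_le_const (by linarith : (0:ℝ) < ε)] with D hD using hD
  obtain ⟨D, hD1, hD2, hD3⟩ := (h1.and (h2.and (eventually_ge_atTop 1))).exists
  refine ⟨fun N => ∑ d ∈ Finset.Icc 1 D, (μ d : ℂ) *
      ((N : ℂ)⁻¹ * ∑ m ∈ Finset.Icc 1 (N / d ^ 2), a (d ^ 2 * m)),
    (∑ d ∈ Finset.Icc 1 D, (μ d : ℂ) * ((d : ℂ) ^ 2)⁻¹) * A, ?_, ?_, ?_⟩
  · -- tendsto of truncation
    rw [Finset.sum_mul]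
    apply tendsto_finset_sum
    intro d hd
    have hd1 : 1 ≤ d := (Finset.mem_Icc.mp hd).1
    have hdsq : 0 < d ^ 2 := pow_pos hd1 2
    have heq : ((μ d : ℂ)) * ((d : ℂ) ^ 2)⁻¹ * A = (μ d : ℂ) * (((d ^ 2 : ℕ) : ℂ)⁻¹ * A) := by
      push_cast
      ring
    rw [heq]
    exact ((div_floor_limit' (fun K => ∑ m ∈ Finset.Icc 1 K, a (d ^ 2 * m)) A
      (d ^ 2) hdsq (hinv (d ^ 2) hdsq)).const_mul ((μ d : ℂ)))
  · -- eventual closeness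
    filter_upwards [eventually_ge_atTop D, eventually_ge_atTop 1] with N hND hN1
    have hid := base_identity a N
    have e1 : Finset.Icc 1 N = Finset.Ioc 0 N := by simp [← Finset.Icc_add_one_left_eq_Ioc]
    have e2 : Finset.Icc 1 D = Finset.Ioc 0 D := by simp [← Finset.Icc_add_one_left_eq_Ioc]
    have hsplit : Finset.Icc 1 N = Finset.Icc 1 D ∪ Finset.Ioc D N := by
      rw [e1, e2]
      exact (Finset.Ioc_union_Ioc_eq_Ioc (Nat.zero_le D) hND).symm
    have hdisj : Disjoint (Finset.Icc 1 D) (Finset.Ioc D N) := by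
      simp only [Finset.disjoint_left, Finset.mem_Icc, Finset.mem_Ioc]
      rintro x ⟨_, hx⟩ ⟨hx', _⟩
      omega
    have : (N : ℂ)⁻¹ * ∑ n ∈ (Finset.Icc 1 N).filter (fun n => Squarefree n), a n
        = ∑ d ∈ Finset.Icc 1 D, (μ d : ℂ) * ((N : ℂ)⁻¹ * ∑ m ∈ Finset.Icc 1 (N / d ^ 2), a (d ^ 2 * m))
          + ∑ d ∈ Finset.Ioc D N, (μ d : ℂ) * ((N : ℂ)⁻¹ * ∑ m ∈ Finset.Icc 1 (N / d ^ 2), a (d ^ 2 * m)) := by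
      rw [← hid, hsplit, Finset.sum_union hdisj, mul_add, Finset.mul_sum, Finset.mul_sum]
      congr 1 <;> exact Finset.sum_congr rfl fun d _ => by ring
    rw [this]
    have hb : ∀ d ∈ Finset.Ioc D N,
        ‖(μ d : ℂ) * ((N : ℂ)⁻¹ * ∑ m ∈ Finset.Icc 1 (N / d ^ 2), a (d ^ 2 * m))‖
          ≤ ((d : ℝ) ^ 2)⁻¹ * M := by
      intro d hd
      have hd1 : 1 ≤ d := by
        simp only [Finset.mem_Ioc] at hd
        omega
      have hd1' : (0:ℝ) < (d:ℝ) := by exact_mod_cast hd1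
      rw [norm_mul]
      have h1 := avg_norm_bound a M hbd (fun m => d ^ 2 * m) (Finset.Icc 1 (N / d ^ 2)) N
      have hcard : ((Finset.Icc 1 (N / d ^ 2)).card : ℝ) = (N / d ^ 2 : ℕ) := by
        rw [Nat.card_Icc]; push_cast; ring
      have hN' : (0:ℝ) < N := by exact_mod_cast hN1
      have hfl : ((N / d ^ 2 : ℕ) : ℝ) ≤ (N : ℝ) / (d : ℝ) ^ 2 := by
        have := Nat.cast_div_le (α := ℝ) (m := N) (n := d ^ 2)
        push_cast at this ⊢
        exact this
      calc ‖(μ d : ℂ)‖ * ‖(N : ℂ)⁻¹ * ∑ m ∈ Finset.Icc 1 (N / d ^ 2), a (d ^ 2 * m)‖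
          ≤ 1 * (M * (Finset.Icc 1 (N / d ^ 2)).card / N) :=
            mul_le_mul (norm_moebius_le_one d) h1 (norm_nonneg _) zero_le_one
        _ = M * ((N / d ^ 2 : ℕ) : ℝ) / N := by rw [one_mul, hcard]
        _ ≤ M * ((N : ℝ) / (d : ℝ) ^ 2) / N := by gcongr
        _ = ((d : ℝ) ^ 2)⁻¹ * M := by field_simp
    rw [add_sub_cancel_left]
    calc ‖∑ d ∈ Finset.Ioc D N, (μ d : ℂ) *
          ((N : ℂ)⁻¹ * ∑ m ∈ Finset.Icc 1 (N / d ^ 2), a (d ^ 2 * m))‖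
        ≤ ∑ d ∈ Finset.Ioc D N, ((d : ℝ) ^ 2)⁻¹ * M := norm_sum_le_of_le _ hb
      _ = (∑ d ∈ Finset.Ioc D N, ((d : ℝ) ^ 2)⁻¹) * M := by rw [Finset.sum_mul]
      _ ≤ (D : ℝ)⁻¹ * M := by
          refine mul_le_mul_of_nonneg_right ?_ hM0
          refine le_trans (sum_Ioc_inv_sq_le_sub (by omega) hND) ?_
          simp only [sub_le_self_iff]
          positivity
      _ = M * (D : ℝ)⁻¹ := mul_comm _ _
      _ ≤ ε := hD2
  · -- limit closeness
    rw [← sub_mul, norm_mul]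
    calc ‖(∑ d ∈ Finset.Icc 1 D, (μ d : ℂ) * ((d : ℂ) ^ 2)⁻¹) - ((6 / Real.pi ^ 2 : ℝ) : ℂ)‖ * ‖A‖
        ≤ (ε / (‖A‖ + 1)) * ‖A‖ := mul_le_mul_of_nonneg_right hD1 (norm_nonneg _)
      _ ≤ ε := by
          rw [div_mul_eq_mul_div, div_le_iff₀ (by positivity)]
          nlinarith [norm_nonneg A]

lemma step_identity (a : ℕ → ℂ) (p : ℕ) (hp : p.Prime) (S : Finset ℕ)
    (hS : ∀ q ∈ S, Nat.Prime q) (hpS : p ∉ S) (N : ℕ) :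
    ∑ n ∈ (Finset.Icc 1 N).filter (fun n => Squarefree n ∧ ∀ q ∈ insert p S, ¬ q ∣ n), a n
      = ∑ n ∈ (Finset.Icc 1 N).filter (fun n => Squarefree n ∧ ∀ q ∈ S, ¬ q ∣ n), a n
        - ∑ m ∈ (Finset.Icc 1 (N / p)).filter
            (fun m => Squarefree m ∧ ∀ q ∈ insert p S, ¬ q ∣ m), a (p * m) := by
  rw [eq_sub_iff_add_eq]
  have h1 : (Finset.Icc 1 N).filter (fun n => Squarefree n ∧ ∀ q ∈ insert p S, ¬ q ∣ n)
      = (Finset.Icc 1 N).filter (fun n => (Squarefree n ∧ ∀ q ∈ S, ¬ q ∣ n) ∧ ¬ p ∣ n) := by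
    apply Finset.filter_congr
    intro n _
    simp only [Finset.forall_mem_insert]
    tauto
  have h2 : ∑ m ∈ (Finset.Icc 1 (N / p)).filter
        (fun m => Squarefree m ∧ ∀ q ∈ insert p S, ¬ q ∣ m), a (p * m)
      = ∑ n ∈ (Finset.Icc 1 N).filter
          (fun n => (Squarefree n ∧ ∀ q ∈ S, ¬ q ∣ n) ∧ p ∣ n), a n := by
    refine Finset.sum_nbij' (fun m => p * m) (fun n => n / p) ?_ ?_ ?_ ?_ ?_
    · intro m hm
      simp only [Finset.mem_filter, Finset.mem_Icc, Finset.forall_mem_insert] at hm ⊢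
      obtain ⟨⟨hm1, hm2⟩, hsf, ⟨hpm, hSm⟩⟩ := hm
      have hcop : p.Coprime m := (Nat.Prime.coprime_iff_not_dvd hp).mpr hpm
      refine ⟨⟨Nat.one_le_iff_ne_zero.mpr (Nat.mul_ne_zero hp.pos.ne' (by omega)),
        ?_⟩, ⟨Nat.squarefree_mul_iff.mpr ⟨hcop, hp.prime.squarefree, hsf⟩, ?_⟩,
        Dvd.intro m rfl⟩
      · rw [mul_comm]
        exact (Nat.le_div_iff_mul_le hp.pos).mp hm2
      · intro q hq hdvd
        have hq' : q.Prime := hS q hq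
        rcases (Nat.Prime.dvd_mul hq').mp hdvd with hqp | hqm
        · exact hpS (((Nat.prime_dvd_prime_iff_eq hq' hp).mp hqp) ▸ hq)
        · exact hSm q hq hqm
    · intro n hn
      simp only [Finset.mem_filter, Finset.mem_Icc, Finset.forall_mem_insert] at hn ⊢
      obtain ⟨⟨hn1, hn2⟩, ⟨hsf, hScond⟩, hpn⟩ := hn
      have hmn : n / p ∣ n := Nat.div_dvd_of_dvd hpn
      refine ⟨⟨(Nat.one_le_div_iff hp.pos).mpr (Nat.le_of_dvd (by omega) hpn),
        Nat.div_le_div_right hn2⟩, hsf.squarefree_of_dvd hmn, ?_, ?_⟩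
      · intro hc
        obtain ⟨e, he⟩ := hc
        have hne := Nat.mul_div_cancel' hpn
        refine hp.not_isUnit (hsf p ⟨e, ?_⟩)
        rw [← hne, he]
        ring
      · exact fun q hq hqm => hScond q hq (hqm.trans hmn)
    · intro m hm
      exact Nat.mul_div_cancel_left m hp.pos
    · intro n hn
      simp only [Finset.mem_filter] at hn
      exact Nat.mul_div_cancel' hn.2.2
    · intro m hm
      rfl
  rw [h1, h2, ← Finset.sum_union]
  · congr 1
    ext n
    simp only [Finset.mem_union, Finset.mem_filter]
    tauto
  · simp only [Finset.disjoint_left, Finset.mem_filter]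
    rintro x ⟨_, _, hx⟩ ⟨_, _, hx'⟩
    exact hx hx'

lemma iterated_identity (a : ℕ → ℂ) (p : ℕ) (hp : p.Prime) (S : Finset ℕ)
    (hS : ∀ q ∈ S, Nat.Prime q) (hpS : p ∉ S) (N : ℕ) (k : ℕ) :
    ∑ n ∈ (Finset.Icc 1 N).filter (fun n => Squarefree n ∧ ∀ q ∈ insert p S, ¬ q ∣ n), a n
      = (∑ j ∈ Finset.range k, (-1 : ℂ) ^ j *
          ∑ n ∈ (Finset.Icc 1 (N / p ^ j)).filter
            (fun n => Squarefree n ∧ ∀ q ∈ S, ¬ q ∣ n), a (p ^ j * n))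
        + (-1 : ℂ) ^ k *
          ∑ m ∈ (Finset.Icc 1 (N / p ^ k)).filter
            (fun m => Squarefree m ∧ ∀ q ∈ insert p S, ¬ q ∣ m), a (p ^ k * m) := by
  induction k with
  | zero => simp
  | succ k ih =>
    rw [ih, Finset.sum_range_succ]
    have hstep := step_identity (fun n => a (p ^ k * n)) p hp S hS hpS (N / p ^ k)
    have hdd : N / p ^ k / p = N / p ^ (k + 1) := by
      rw [Nat.div_div_eq_div_mul, pow_succ]
    rw [hdd] at hstep
    have hfun1 : ∀ m : ℕ, a (p ^ k * (p * m)) = a (p ^ (k + 1) * m) := by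
      intro m
      congr 1
      ring
    have hstep' : ∑ n ∈ (Finset.Icc 1 (N / p ^ k)).filter
          (fun m => Squarefree m ∧ ∀ q ∈ insert p S, ¬ q ∣ m), a (p ^ k * n)
        = ∑ n ∈ (Finset.Icc 1 (N / p ^ k)).filter
            (fun n => Squarefree n ∧ ∀ q ∈ S, ¬ q ∣ n), a (p ^ k * n)
          - ∑ m ∈ (Finset.Icc 1 (N / p ^ (k + 1))).filter
              (fun m => Squarefree m ∧ ∀ q ∈ insert p S, ¬ q ∣ m), a (p ^ (k + 1) * m) := by
      rw [hstep]
      congr 1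
      exact Finset.sum_congr rfl fun m _ => hfun1 m
    rw [hstep']
    ring

lemma step_case (a : ℕ → ℂ) (M : ℝ) (hbd : ∀ n, ‖a n‖ ≤ M) (A : ℂ) (C : ℂ)
    (hinv : ∀ m : ℕ, 0 < m →
      Tendsto (fun N : ℕ => (N : ℂ)⁻¹ * ∑ n ∈ Finset.Icc 1 N, a (m * n))
        atTop (nhds A))
    (p : ℕ) (hp : p.Prime) (S : Finset ℕ) (hS : ∀ q ∈ S, Nat.Prime q) (hpS : p ∉ S)
    (IH : ∀ b : ℕ → ℂ, (∀ n, ‖b n‖ ≤ M) →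
      (∀ m : ℕ, 0 < m →
        Tendsto (fun N : ℕ => (N : ℂ)⁻¹ * ∑ n ∈ Finset.Icc 1 N, b (m * n))
          atTop (nhds A)) →
      Tendsto (fun N : ℕ => (N : ℂ)⁻¹ *
          ∑ n ∈ (Finset.Icc 1 N).filter (fun n => Squarefree n ∧ ∀ q ∈ S, ¬ q ∣ n), b n)
        atTop (nhds (C * A))) :
    Tendsto (fun N : ℕ => (N : ℂ)⁻¹ *
        ∑ n ∈ (Finset.Icc 1 N).filter (fun n => Squarefree n ∧ ∀ q ∈ insert p S, ¬ q ∣ n), a n)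
      atTop (nhds (((p : ℂ) / ((p : ℂ) + 1)) * (C * A))) := by
  have hM0 : 0 ≤ M := le_trans (norm_nonneg _) (hbd 0)
  have hp1 : (1:ℝ) < p := by exact_mod_cast hp.one_lt
  have hpC : ((p : ℂ)) ≠ 0 := Nat.cast_ne_zero.mpr hp.pos.ne'
  have hp1C : ((p : ℂ)) + 1 ≠ 0 := by
    have : ((p : ℂ)) + 1 = ((p + 1 : ℕ) : ℂ) := by push_cast; ring
    rw [this]
    exact Nat.cast_ne_zero.mpr (by omega)
  set x : ℂ := -((p : ℂ))⁻¹ with hx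
  have hxne1 : x ≠ 1 := by
    intro h
    have h2 : (p:ℂ) * x = -1 := by
      rw [hx]
      field_simp
    rw [h, mul_one] at h2
    have h3 : (p:ℝ) = -1 := by exact_mod_cast h2
    linarith
  have h1x : (1 : ℂ) - x ≠ 0 := fun h => hxne1 (by linear_combination -h)
  have hgeom_lim : (1 - x)⁻¹ = (p : ℂ) / ((p : ℂ) + 1) := by
    rw [hx]
    rw [inv_eq_iff_eq_inv, eq_comm, inv_div]
    field_simp
    ring
  have hnormx : ‖x‖ = ((p:ℝ))⁻¹ := by
    rw [hx, norm_neg, norm_inv, Complex.norm_natCast]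
  apply approx_tendsto
  intro ε hε
  -- choose k
  have hktend : Tendsto (fun k : ℕ => (M + ‖C * A‖ * ‖(1 - x)⁻¹‖) * ((p:ℝ)⁻¹) ^ k)
      atTop (nhds 0) := by
    have := tendsto_pow_atTop_nhds_zero_of_lt_one
      (by positivity : (0:ℝ) ≤ (p:ℝ)⁻¹) (by rw [inv_lt_one_iff₀]; right; exact hp1)
    simpa using tendsto_const_nhds.mul this
  obtain ⟨k, hk⟩ := (hktend.eventually_le_const hε).exists
  refine ⟨fun N => ∑ j ∈ Finset.range k, (-1 : ℂ) ^ j *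
      ((N : ℂ)⁻¹ * ∑ n ∈ (Finset.Icc 1 (N / p ^ j)).filter
        (fun n => Squarefree n ∧ ∀ q ∈ S, ¬ q ∣ n), a (p ^ j * n)),
    (∑ j ∈ Finset.range k, x ^ j) * (C * A), ?_, ?_, ?_⟩
  · -- tendsto of truncation
    rw [Finset.sum_mul]
    apply tendsto_finset_sum
    intro j hj
    have hpj : 0 < p ^ j := pow_pos hp.pos j
    have hIHj := IH (fun n => a (p ^ j * n)) (fun n => hbd _) ?_
    · have hterm := (div_floor_limit' (fun K => ∑ n ∈ (Finset.Icc 1 K).filter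
          (fun n => Squarefree n ∧ ∀ q ∈ S, ¬ q ∣ n), a (p ^ j * n)) (C * A)
          (p ^ j) hpj hIHj).const_mul ((-1 : ℂ) ^ j)
      have heq : x ^ j * (C * A) = (-1 : ℂ) ^ j * (((p ^ j : ℕ) : ℂ)⁻¹ * (C * A)) := by
        rw [hx]
        push_cast
        rw [neg_pow, inv_pow]
        ring
      rw [heq]
      exact hterm
    · intro m hm
      have := hinv (p ^ j * m) (Nat.mul_pos hpj hm)
      refine this.congr fun N => ?_
      congr 1
      exact Finset.sum_congr rfl fun n _ => by rw [mul_assoc]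
  · -- eventual closeness
    filter_upwards [eventually_ge_atTop 1] with N hN1
    have hid := iterated_identity a p hp S hS hpS N k
    have hdiff : (N : ℂ)⁻¹ * ∑ n ∈ (Finset.Icc 1 N).filter
          (fun n => Squarefree n ∧ ∀ q ∈ insert p S, ¬ q ∣ n), a n
        - ∑ j ∈ Finset.range k, (-1 : ℂ) ^ j *
            ((N : ℂ)⁻¹ * ∑ n ∈ (Finset.Icc 1 (N / p ^ j)).filter
              (fun n => Squarefree n ∧ ∀ q ∈ S, ¬ q ∣ n), a (p ^ j * n))
        = (-1 : ℂ) ^ k * ((N : ℂ)⁻¹ *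
            ∑ m ∈ (Finset.Icc 1 (N / p ^ k)).filter
              (fun m => Squarefree m ∧ ∀ q ∈ insert p S, ¬ q ∣ m), a (p ^ k * m)) := by
      rw [hid, mul_add, Finset.mul_sum,
        Finset.sum_congr rfl (fun j (_ : j ∈ Finset.range k) => by ring :
          ∀ j ∈ Finset.range k, (N : ℂ)⁻¹ * ((-1 : ℂ) ^ j *
            ∑ n ∈ (Finset.Icc 1 (N / p ^ j)).filter
              (fun n => Squarefree n ∧ ∀ q ∈ S, ¬ q ∣ n), a (p ^ j * n))
            = (-1 : ℂ) ^ j * ((N : ℂ)⁻¹ *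
              ∑ n ∈ (Finset.Icc 1 (N / p ^ j)).filter
                (fun n => Squarefree n ∧ ∀ q ∈ S, ¬ q ∣ n), a (p ^ j * n)))]
      ring
    rw [hdiff, norm_mul, norm_pow, norm_neg, norm_one, one_pow, one_mul]
    have hbnd := avg_norm_bound a M hbd (fun m => p ^ k * m)
      ((Finset.Icc 1 (N / p ^ k)).filter
        (fun m => Squarefree m ∧ ∀ q ∈ insert p S, ¬ q ∣ m)) N
    have hN' : (0:ℝ) < N := by exact_mod_cast hN1
    have hcard : (((Finset.Icc 1 (N / p ^ k)).filter
        (fun m => Squarefree m ∧ ∀ q ∈ insert p S, ¬ q ∣ m)).card : ℝ) ≤ ((N / p ^ k : ℕ) : ℝ) := by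
      have h2 : (Finset.Icc 1 (N / p ^ k)).card = N / p ^ k := by
        rw [Nat.card_Icc, Nat.add_sub_cancel]
      calc (((Finset.Icc 1 (N / p ^ k)).filter
            (fun m => Squarefree m ∧ ∀ q ∈ insert p S, ¬ q ∣ m)).card : ℝ)
          ≤ ((Finset.Icc 1 (N / p ^ k)).card : ℝ) := by
            exact_mod_cast Finset.card_filter_le _ _
        _ = ((N / p ^ k : ℕ) : ℝ) := by rw [h2]
    have hfl : ((N / p ^ k : ℕ) : ℝ) ≤ (N : ℝ) / (p : ℝ) ^ k := by
      have := Nat.cast_div_le (α := ℝ) (m := N) (n := p ^ k)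
      push_cast at this ⊢
      exact this
    calc ‖(N : ℂ)⁻¹ * ∑ m ∈ (Finset.Icc 1 (N / p ^ k)).filter
          (fun m => Squarefree m ∧ ∀ q ∈ insert p S, ¬ q ∣ m), a (p ^ k * m)‖
        ≤ M * ((Finset.Icc 1 (N / p ^ k)).filter
            (fun m => Squarefree m ∧ ∀ q ∈ insert p S, ¬ q ∣ m)).card / N := hbnd
      _ ≤ M * ((N : ℝ) / (p : ℝ) ^ k) / N := by gcongr; exact hcard.trans hfl
      _ = M * ((p:ℝ)⁻¹) ^ k := by
          rw [mul_div_assoc, div_div, mul_comm ((p:ℝ) ^ k) (N:ℝ), ← div_div,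
            div_self (ne_of_gt hN'), one_div, ← inv_pow]
      _ ≤ ε := by
          refine le_trans ?_ hk
          have : (0:ℝ) ≤ ‖C * A‖ * ‖(1 - x)⁻¹‖ := by positivity
          nlinarith [pow_nonneg (by positivity : (0:ℝ) ≤ (p:ℝ)⁻¹) k]
  · -- limit closeness
    have hsum : (∑ j ∈ Finset.range k, x ^ j) - (1 - x)⁻¹ = -(x ^ k) * (1 - x)⁻¹ := by
      have hx1 : x - 1 ≠ 0 := sub_ne_zero.mpr hxne1
      rw [geom_sum_eq hxne1]
      field_simp [hx1, h1x]
      ring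
    rw [← hgeom_lim, ← sub_mul, norm_mul, hsum]
    calc ‖-(x ^ k) * (1 - x)⁻¹‖ * ‖C * A‖ = ((p:ℝ)⁻¹) ^ k * (‖(1 - x)⁻¹‖ * ‖C * A‖) := by
          rw [norm_mul, norm_neg, norm_pow, hnormx]
          ring
      _ ≤ ε := by
          refine le_trans ?_ hk
          have h0 : (0:ℝ) ≤ ((p:ℝ)⁻¹) ^ k := by positivity
          nlinarith [hM0, norm_nonneg ((1-x)⁻¹), norm_nonneg (C * A)]

theorem squarefree_average_of_invariant_average
    (a : ℕ → ℂ) (M : ℝ) (hbd : ∀ n, ‖a n‖ ≤ M) (A : ℂ)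
    (havg : Tendsto (fun N : ℕ => (N : ℂ)⁻¹ * ∑ n ∈ Finset.Icc 1 N, a n)
      atTop (nhds A))
    (hinv : ∀ m : ℕ, 0 < m →
      Tendsto (fun N : ℕ => (N : ℂ)⁻¹ * ∑ n ∈ Finset.Icc 1 N, a (m * n))
        atTop (nhds A))
    (S : Finset ℕ) (hS : ∀ p ∈ S, Nat.Prime p) :
    Tendsto (fun N : ℕ => (N : ℂ)⁻¹ *
        ∑ n ∈ (Finset.Icc 1 N).filter
          (fun n => Squarefree n ∧ ∀ p ∈ S, ¬ p ∣ n), a n)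
      atTop
      (nhds (((∏ p ∈ S, ((p : ℂ) / ((p : ℂ) + 1))) * ((6 / Real.pi ^ 2 : ℝ) : ℂ)) * A)) := by
  have key : ∀ T : Finset ℕ, (∀ p ∈ T, Nat.Prime p) →
      ∀ b : ℕ → ℂ, (∀ n, ‖b n‖ ≤ M) →
      (∀ m : ℕ, 0 < m →
        Tendsto (fun N : ℕ => (N : ℂ)⁻¹ * ∑ n ∈ Finset.Icc 1 N, b (m * n))
          atTop (nhds A)) →
      Tendsto (fun N : ℕ => (N : ℂ)⁻¹ *
          ∑ n ∈ (Finset.Icc 1 N).filter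
            (fun n => Squarefree n ∧ ∀ p ∈ T, ¬ p ∣ n), b n)
        atTop
        (nhds (((∏ p ∈ T, ((p : ℂ) / ((p : ℂ) + 1))) * ((6 / Real.pi ^ 2 : ℝ) : ℂ)) * A)) := by
    intro T
    induction T using Finset.induction_on with
    | empty =>
      intro _ b hb hbinv
      have hbase := base_case b M hb A hbinv
      have hset : ∀ N : ℕ, (Finset.Icc 1 N).filter
          (fun n => Squarefree n ∧ ∀ p ∈ (∅ : Finset ℕ), ¬ p ∣ n)
            = (Finset.Icc 1 N).filter (fun n => Squarefree n) := by
        intro N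
        apply Finset.filter_congr
        intro n _
        simp
      have hconst : ((∏ p ∈ (∅ : Finset ℕ), ((p : ℂ) / ((p : ℂ) + 1)))
          * ((6 / Real.pi ^ 2 : ℝ) : ℂ)) * A = ((6 / Real.pi ^ 2 : ℝ) : ℂ) * A := by
        rw [Finset.prod_empty, one_mul]
      rw [hconst]
      refine hbase.congr fun N => ?_
      rw [hset N]
    | @insert p T hpT ih =>
      intro hPr b hb hbinv
      have hp : p.Prime := hPr p (Finset.mem_insert_self p T)
      have hT : ∀ q ∈ T, Nat.Prime q := fun q hq => hPr q (Finset.mem_insert_of_mem hq)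
      have hstep := step_case b M hb A
        ((∏ q ∈ T, ((q : ℂ) / ((q : ℂ) + 1))) * ((6 / Real.pi ^ 2 : ℝ) : ℂ))
        hbinv p hp T hT hpT (fun c hc hcinv => ih hT c hc hcinv)
      have hconst : ((∏ q ∈ insert p T, ((q : ℂ) / ((q : ℂ) + 1)))
            * ((6 / Real.pi ^ 2 : ℝ) : ℂ)) * A
          = ((p : ℂ) / ((p : ℂ) + 1)) *
            (((∏ q ∈ T, ((q : ℂ) / ((q : ℂ) + 1))) * ((6 / Real.pi ^ 2 : ℝ) : ℂ)) * A) := by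
        rw [Finset.prod_insert hpT]
        ring
      rw [hconst]
      exact hstep
  exact key S hS a hbd hinv
end

section
/- Let a : ℕ → ℂ be a bounded arithmetic function whose average is invariant under multiplications, with average A, and let S be a finite set of prime numbers. Then lim_{N→∞} (1/N) · Σ_{n=1}^N w_S(n) a(n) = (∏_{p∈S} (p−1)/p) · A. -/
open Filter Topology Finset
open scoped Classical

private lemma sum_filter_dvd (p N : ℕ) (hp : 0 < p) (F : ℕ → ℂ) :
    ∑ n ∈ (Finset.Icc 1 N).filter (fun n => p ∣ n), F n
      = ∑ m ∈ Finset.Icc 1 (N / p), F (p * m) := by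
  refine Finset.sum_nbij' (fun n => n / p) (fun m => p * m) ?_ ?_ ?_ ?_ ?_
  · intro n hn
    simp only [Finset.mem_filter, Finset.mem_Icc] at hn ⊢
    obtain ⟨⟨h1, h2⟩, hd⟩ := hn
    constructor
    · exact (Nat.one_le_div_iff hp).2 (Nat.le_of_dvd h1 hd)
    · exact Nat.div_le_div_right h2
  · intro m hm
    simp only [Finset.mem_filter, Finset.mem_Icc] at hm ⊢
    obtain ⟨h1, h2⟩ := hm
    refine ⟨⟨Nat.one_le_iff_ne_zero.2 (by positivity), ?_⟩, Dvd.intro m rfl⟩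
    rw [mul_comm]
    exact (Nat.le_div_iff_mul_le hp).1 h2
  · intro n hn
    simp only [Finset.mem_filter] at hn
    exact Nat.mul_div_cancel' hn.2
  · intro m _
    exact Nat.mul_div_cancel_left m hp
  · intro n hn
    simp only [Finset.mem_filter] at hn
    rw [Nat.mul_div_cancel' hn.2]

private lemma key (S : Finset ℕ) (hS : ∀ p ∈ S, Nat.Prime p) :
    ∀ (a : ℕ → ℂ) (A : ℂ),
      (∀ m : ℕ, 0 < m →
        Tendsto (fun N : ℕ => (N : ℂ)⁻¹ * ∑ n ∈ Finset.Icc 1 N, a (m * n))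
          atTop (nhds A)) →
      Tendsto (fun N : ℕ => (N : ℂ)⁻¹ *
          ∑ n ∈ Finset.Icc 1 N, (if ∀ p ∈ S, ¬ p ∣ n then a n else 0))
        atTop (nhds ((∏ p ∈ S, (((p : ℂ) - 1) / (p : ℂ))) * A)) := by
  induction S using Finset.induction_on with
  | empty =>
    intro a A hinv
    have := hinv 1 one_pos
    simpa using this
  | @insert p S' hp ih =>
    intro a A hinv
    have hpp : Nat.Prime p := hS p (Finset.mem_insert_self p S')
    have hS' : ∀ q ∈ S', Nat.Prime q := fun q hq => hS q (Finset.mem_insert_of_mem hq)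
    have hppos : 0 < p := hpp.pos
    -- b n = a (p * n) satisfies the hypotheses with the same A
    set b : ℕ → ℂ := fun n => a (p * n) with hb
    have hbinv : ∀ m : ℕ, 0 < m →
        Tendsto (fun N : ℕ => (N : ℂ)⁻¹ * ∑ n ∈ Finset.Icc 1 N, b (m * n))
          atTop (nhds A) := by
      intro m hm
      have := hinv (p * m) (Nat.mul_pos hppos hm)
      convert this using 3 with N
      apply Finset.sum_congr rfl
      intro n _
      simp [hb, mul_assoc]
    -- IH for a and for b
    have T1 := ih hS' a A hinv
    have T2 := ih hS' b A hbinv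
    -- w_{S'}(p*m) = w_{S'}(m)
    have hw : ∀ m : ℕ, (∀ q ∈ S', ¬ q ∣ p * m) ↔ (∀ q ∈ S', ¬ q ∣ m) := by
      intro m
      constructor
      · intro h q hq hd
        exact h q hq (hd.mul_left p)
      · intro h q hq hd
        rcases (Nat.Prime.dvd_mul (hS' q hq)).1 hd with h1 | h2
        · exact hp (((Nat.prime_dvd_prime_iff_eq (hS' q hq) hpp).1 h1) ▸ hq)
        · exact h q hq h2
    -- pointwise split of the summand
    have hsplit : ∀ n : ℕ,
        (if ∀ q ∈ insert p S', ¬ q ∣ n then a n else 0)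
          = (if ∀ q ∈ S', ¬ q ∣ n then a n else 0)
            - (if p ∣ n then (if ∀ q ∈ S', ¬ q ∣ n then a n else 0) else 0) := by
      intro n
      by_cases hd : p ∣ n
      · have : ¬ (∀ q ∈ insert p S', ¬ q ∣ n) := by
          intro h; exact h p (Finset.mem_insert_self p S') hd
        rw [if_neg this, if_pos hd]; ring
      · rw [if_neg hd, sub_zero]
        by_cases h' : ∀ q ∈ S', ¬ q ∣ n
        · rw [if_pos h', if_pos]
          intro q hq
          rcases Finset.mem_insert.1 hq with rfl | hq'
          · exact hd
          · exact h' q hq'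
        · rw [if_neg h', if_neg]
          intro h; exact h' fun q hq => h q (Finset.mem_insert_of_mem hq)
    -- the divisible part sum equals sum over Icc 1 (N/p) of b
    have hsum : ∀ N : ℕ,
        ∑ n ∈ Finset.Icc 1 N, (if p ∣ n then (if ∀ q ∈ S', ¬ q ∣ n then a n else 0) else 0)
          = ∑ m ∈ Finset.Icc 1 (N / p), (if ∀ q ∈ S', ¬ q ∣ m then b m else 0) := by
      intro N
      rw [← Finset.sum_filter]
      rw [sum_filter_dvd p N hppos (fun n => if ∀ q ∈ S', ¬ q ∣ n then a n else 0)]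
      apply Finset.sum_congr rfl
      intro m _
      by_cases h' : ∀ q ∈ S', ¬ q ∣ m
      · rw [if_pos ((hw m).2 h'), if_pos h']
      · rw [if_neg (fun h => h' ((hw m).1 h)), if_neg h']
    -- tendsto of N/p to atTop
    have hdiv : Tendsto (fun N : ℕ => N / p) atTop atTop := by
      apply tendsto_atTop_atTop.2
      intro c
      refine ⟨p * c, fun n hn => ?_⟩
      exact (Nat.le_div_iff_mul_le hppos).2 (by rw [mul_comm]; exact hn)
    -- ratio (N/p)/N tends to 1/p (in ℂ)
    have hratio : Tendsto (fun N : ℕ => ((N / p : ℕ) : ℂ) * (N : ℂ)⁻¹) atTop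
        (nhds ((p : ℂ)⁻¹)) := by
      have hr : Tendsto (fun N : ℕ => ((N / p : ℕ) : ℝ) / (N : ℝ)) atTop
          (nhds ((p : ℝ)⁻¹)) := by
        have h1 : Tendsto (fun x : ℝ => (⌊(p : ℝ)⁻¹ * x⌋₊ : ℝ) / x) atTop
            (nhds ((p : ℝ)⁻¹)) :=
          tendsto_nat_floor_mul_div_atTop (by positivity)
        have h2 := h1.comp (tendsto_natCast_atTop_atTop (R := ℝ))
        apply h2.congr
        intro N
        simp only [Function.comp_apply]
        rw [inv_mul_eq_div, Nat.floor_div_natCast, Nat.floor_natCast]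
      have := (Complex.continuous_ofReal.tendsto _).comp hr
      simp only [Function.comp_def] at this
      convert this using 2 with N
      · push_cast [div_eq_mul_inv]; ring
      · push_cast; ring
    -- limit of the divisible part
    have hg : Tendsto (fun N : ℕ => ((N / p : ℕ) : ℂ)⁻¹ *
        ∑ m ∈ Finset.Icc 1 (N / p), (if ∀ q ∈ S', ¬ q ∣ m then b m else 0)) atTop
        (nhds ((∏ q ∈ S', (((q : ℂ) - 1) / (q : ℂ))) * A)) :=
      T2.comp hdiv
    have hT3 : Tendsto (fun N : ℕ => (N : ℂ)⁻¹ *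
        ∑ n ∈ Finset.Icc 1 N, (if p ∣ n then (if ∀ q ∈ S', ¬ q ∣ n then a n else 0) else 0))
        atTop (nhds ((p : ℂ)⁻¹ * ((∏ q ∈ S', (((q : ℂ) - 1) / (q : ℂ))) * A))) := by
      have := hratio.mul hg
      apply this.congr
      intro N
      rw [hsum N]
      by_cases hN : N / p = 0
      · rw [hN]; simp
      · have hKne : ((N / p : ℕ) : ℂ) ≠ 0 := Nat.cast_ne_zero.2 hN
        rw [mul_mul_mul_comm, mul_inv_cancel₀ hKne, one_mul]
    -- combine
    have hfinal := T1.sub hT3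
    have heq : ∀ N : ℕ, (N : ℂ)⁻¹ *
        ∑ n ∈ Finset.Icc 1 N, (if ∀ q ∈ insert p S', ¬ q ∣ n then a n else 0)
        = (N : ℂ)⁻¹ * ∑ n ∈ Finset.Icc 1 N, (if ∀ q ∈ S', ¬ q ∣ n then a n else 0)
          - (N : ℂ)⁻¹ * ∑ n ∈ Finset.Icc 1 N,
              (if p ∣ n then (if ∀ q ∈ S', ¬ q ∣ n then a n else 0) else 0) := by
      intro N
      rw [← mul_sub, ← Finset.sum_sub_distrib]
      congr 1
      exact Finset.sum_congr rfl fun n _ => hsplit n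
    have hval : (∏ q ∈ insert p S', (((q : ℂ) - 1) / (q : ℂ))) * A
        = (∏ q ∈ S', (((q : ℂ) - 1) / (q : ℂ))) * A
          - (p : ℂ)⁻¹ * ((∏ q ∈ S', (((q : ℂ) - 1) / (q : ℂ))) * A) := by
      have hpne : (p : ℂ) ≠ 0 := Nat.cast_ne_zero.2 hppos.ne'
      have h1 : ((p : ℂ) - 1) / p = 1 - (p : ℂ)⁻¹ := by field_simp
      rw [Finset.prod_insert hp, h1]
      ring
    rw [hval]
    exact hfinal.congr fun N => (heq N).symm

theorem wS_average_of_invariant_average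
    (a : ℕ → ℂ) (M : ℝ) (hbd : ∀ n, ‖a n‖ ≤ M) (A : ℂ)
    (havg : Tendsto (fun N : ℕ => (N : ℂ)⁻¹ * ∑ n ∈ Finset.Icc 1 N, a n)
      atTop (nhds A))
    (hinv : ∀ m : ℕ, 0 < m →
      Tendsto (fun N : ℕ => (N : ℂ)⁻¹ * ∑ n ∈ Finset.Icc 1 N, a (m * n))
        atTop (nhds A))
    (S : Finset ℕ) (hS : ∀ p ∈ S, Nat.Prime p) :
    Tendsto (fun N : ℕ => (N : ℂ)⁻¹ *
        ∑ n ∈ Finset.Icc 1 N, (if ∀ p ∈ S, ¬ p ∣ n then a n else 0))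
      atTop
      (nhds ((∏ p ∈ S, (((p : ℂ) - 1) / (p : ℂ))) * A)) := by
  exact key S hS a A hinv
end

section
/- Let k ≥ 0 and m ≥ 1 be integers. Then for every n ≥ 1, Ω(φ_k(n)) ≤ Ω(φ_k(mn)) ≤ Ω(φ_k(n)) + Ω(φ̃_k(m)), where φ̃(m) = m·φ(m) and φ̃_k denotes the k-fold iterate of φ̃ (with φ̃_0(m) = m). In particular, Ω(φ_k(mn)) − Ω(φ_k(n)) is bounded by a constant depending only on k and m. -/
open scoped Classical

/-- The number of prime factors counted with multiplicity. -/
noncomputable def Omega (n : ℕ) : ℕ := ArithmeticFunction.cardFactors n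

/-- `phitilde m = m * φ(m)`. -/
def phitilde (m : ℕ) : ℕ := m * Nat.totient m

lemma totient_mul_dvd (c a : ℕ) : Nat.totient (c * a) ∣ Nat.totient c * Nat.totient a * c := by
  have h := Nat.totient_gcd_mul_totient_mul c a
  have h1 : Nat.totient (c * a) ∣ Nat.totient c * Nat.totient a * Nat.gcd c a := by
    exact ⟨Nat.totient (Nat.gcd c a), by rw [← h]; ring⟩
  exact h1.trans (mul_dvd_mul_left _ (Nat.gcd_dvd_left c a))

lemma omega_le_of_dvd {a b : ℕ} (h : a ∣ b) (hb : b ≠ 0) : Omega a ≤ Omega b := by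
  obtain ⟨c, rfl⟩ := h
  have ha : a ≠ 0 := by rintro rfl; simp at hb
  have hc : c ≠ 0 := by rintro rfl; simp at hb
  unfold Omega
  rw [ArithmeticFunction.cardFactors_mul ha hc]
  omega

theorem omega_iterated_totient_mul_bounds (k m n : ℕ) (hm : 1 ≤ m) (hn : 1 ≤ n) :
    Omega (Nat.totient^[k] n) ≤ Omega (Nat.totient^[k] (m * n)) ∧
      Omega (Nat.totient^[k] (m * n))
        ≤ Omega (Nat.totient^[k] n) + Omega (phitilde^[k] m) := by
  have key : ∀ k : ℕ, Nat.totient^[k] n ∣ Nat.totient^[k] (m * n) ∧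
      Nat.totient^[k] (m * n) ∣ phitilde^[k] m * Nat.totient^[k] n := by
    intro k
    induction k with
    | zero => exact ⟨⟨m, by simp [mul_comm]⟩, dvd_refl _⟩
    | succ k ih =>
      obtain ⟨h1, h2⟩ := ih
      simp only [Function.iterate_succ_apply']
      refine ⟨Nat.totient_dvd_of_dvd h1, ?_⟩
      refine (Nat.totient_dvd_of_dvd h2).trans ?_
      refine (totient_mul_dvd _ _).trans ?_
      rw [phitilde]
      exact ⟨1, by ring⟩
  obtain ⟨h1, h2⟩ := key k
  have hpos : ∀ j : ℕ, 0 < Nat.totient^[j] n := by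
    intro j
    induction j with
    | zero => exact hn
    | succ j ih => rw [Function.iterate_succ_apply']; exact Nat.totient_pos.2 ih
  have hppos : ∀ j : ℕ, 0 < phitilde^[j] m := by
    intro j
    induction j with
    | zero => exact hm
    | succ j ih =>
      rw [Function.iterate_succ_apply', phitilde]
      exact Nat.mul_pos ih (Nat.totient_pos.2 ih)
  have hmn : ∀ j : ℕ, 0 < Nat.totient^[j] (m * n) := by
    intro j
    induction j with
    | zero => exact Nat.mul_pos hm hn
    | succ j ih => rw [Function.iterate_succ_apply']; exact Nat.totient_pos.2 ih
  constructor
  · exact omega_le_of_dvd h1 (hmn k).ne'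
  · have := omega_le_of_dvd h2 (Nat.mul_pos (hppos k) (hpos k)).ne'
    unfold Omega at this ⊢
    rw [ArithmeticFunction.cardFactors_mul (hppos k).ne' (hpos k).ne'] at this
    omega
end

section
/- Let k ≥ 2 be an integer and let a : ℕ → ℂ be a bounded arithmetic function with k-th power invariant average under multiplications, with L = lim_{N→∞} (1/N) Σ_{n=1}^N a(n^k). Then lim_{N→∞} (1/Q_k(N)) Σ_{n ≤ N, n k-full} a(n) = L, where Q_k(N) = #{n ≤ N : n is k-full}. -/
open Filter Topology Finset
open scoped Classical

/-- A natural number is `k`-full if `p ^ k` divides it for every prime `p` dividing it. -/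
def IsKFull (k n : ℕ) : Prop := ∀ p : ℕ, Nat.Prime p → p ∣ n → p ^ k ∣ n

namespace KFullAux

/-- remainder exponent -/
def beta (k e : ℕ) : ℕ := if k ∣ e then 0 else k + e % k

/-- numbers whose prime exponents all lie in `[k+1, k+m]` -/
def CoreB (k m r : ℕ) : Prop :=
  0 < r ∧ ∀ p ∈ r.factorization.support,
    k + 1 ≤ r.factorization p ∧ r.factorization p ≤ k + m

/-- the "core" part family -/
def IsCore (k r : ℕ) : Prop := CoreB k (k - 1) r

lemma beta_spec {k e : ℕ} (hk : 1 ≤ k) (he : k ≤ e) : ∃ c, e = k * c + beta k e := by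
  unfold beta
  split_ifs with h
  · obtain ⟨c, rfl⟩ := h; exact ⟨c, by omega⟩
  · refine ⟨e / k - 1, ?_⟩
    have h1 : k * (e / k) + e % k = e := Nat.div_add_mod e k
    have h2 : 1 ≤ e / k := Nat.one_le_div_iff (by omega) |>.2 he
    have h3 : k * 1 ≤ k * (e / k) := Nat.mul_le_mul_left k h2
    have h4 : k * (e / k - 1) = k * (e / k) - k * 1 := by rw [← Nat.mul_sub]
    omega

lemma beta_cases {k e : ℕ} (hk : 2 ≤ k) :
    beta k e = 0 ∨ (k + 1 ≤ beta k e ∧ beta k e ≤ 2 * k - 1) := by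
  unfold beta
  split_ifs with h
  · exact Or.inl rfl
  · right
    have h1 : e % k < k := Nat.mod_lt e (by omega)
    have h2 : e % k ≠ 0 := fun h0 => h (Nat.dvd_of_mod_eq_zero h0)
    omega

lemma beta_eval {k a b : ℕ} (hk : 2 ≤ k) (hb : b = 0 ∨ (k + 1 ≤ b ∧ b ≤ 2 * k - 1)) :
    beta k (k * a + b) = b := by
  rcases hb with rfl | ⟨h1, h2⟩
  · unfold beta
    rw [add_zero, if_pos (Dvd.intro a rfl)]
  · unfold beta
    have hbk : b % k = b - k := by
      have : b - k < k := by omega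
      conv_lhs => rw [show b = k * 1 + (b - k) by omega]
      rw [Nat.mul_add_mod]
      exact Nat.mod_eq_of_lt this
    have hndvd : ¬ k ∣ (k * a + b) := by
      intro hd
      have : k ∣ b := (Nat.dvd_add_right (Dvd.intro a rfl)).1 hd
      obtain ⟨c, rfl⟩ := this
      rcases c with _ | _ | c
      · omega
      · omega
      · have : k * 2 ≤ k * (c + 1 + 1) := Nat.mul_le_mul_left k (by omega)
        omega
    rw [if_neg hndvd, Nat.mul_add_mod, hbk]
    omega


lemma factorization_prod_pow (s : Finset ℕ) (hs : ∀ p ∈ s, p.Prime) (f : ℕ → ℕ) (p : ℕ) :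
    (∏ q ∈ s, q ^ f q).factorization p = if p ∈ s then f p else 0 := by
  classical
  induction s using Finset.induction_on with
  | empty => simp
  | @insert q s hq ih =>
    have hqp : Nat.Prime q := hs q (Finset.mem_insert_self q s)
    have hs' : ∀ p ∈ s, Nat.Prime p := fun p hp => hs p (Finset.mem_insert_of_mem hp)
    have h1 : (q ^ f q : ℕ) ≠ 0 := pow_ne_zero _ hqp.pos.ne'
    have h2 : (∏ x ∈ s, x ^ f x : ℕ) ≠ 0 :=
      Finset.prod_ne_zero_iff.2 fun x hx => pow_ne_zero _ (hs' x hx).pos.ne'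
    rw [Finset.prod_insert hq, Nat.factorization_mul h1 h2, Nat.factorization_pow,
      hqp.factorization]
    simp only [Finsupp.coe_add, Finsupp.coe_smul, Pi.add_apply, Pi.smul_apply,
      Finsupp.single_apply, smul_eq_mul, ih hs']
    by_cases hpq : p = q
    · subst hpq
      rw [if_pos rfl, if_pos (Finset.mem_insert_self p s), if_neg hq]
      ring
    · rw [if_neg (fun h => hpq h.symm)]
      by_cases hps : p ∈ s
      · rw [if_pos hps, if_pos (Finset.mem_insert_of_mem hps)]; ring
      · rw [if_neg hps, if_neg (by simp [hpq, hps])]; ring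

/-- the core part of a `k`-full number -/
def rpart (k n : ℕ) : ℕ :=
  ∏ p ∈ n.factorization.support, p ^ beta k (n.factorization p)

/-- the `k`-th root part of a `k`-full number -/
def qpart (k n : ℕ) : ℕ :=
  ∏ p ∈ n.factorization.support,
    p ^ ((n.factorization p - beta k (n.factorization p)) / k)

lemma support_prime {n p : ℕ} (hp : p ∈ n.factorization.support) : p.Prime := by
  rw [Nat.support_factorization] at hp
  exact Nat.prime_of_mem_primeFactors hp

lemma rpart_pos (k n : ℕ) : 0 < rpart k n :=
  Finset.prod_pos fun p hp => pow_pos (support_prime hp).pos _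

lemma qpart_pos (k n : ℕ) : 0 < qpart k n :=
  Finset.prod_pos fun p hp => pow_pos (support_prime hp).pos _

lemma kfull_exponent {k n p : ℕ} (hn : n ≠ 0) (hf : IsKFull k n)
    (hp : p ∈ n.factorization.support) : k ≤ n.factorization p := by
  have hpp : p.Prime := support_prime hp
  have hdvd : p ∣ n := Nat.dvd_of_mem_primeFactors (by rwa [Nat.support_factorization] at hp)
  exact (Nat.Prime.pow_dvd_iff_le_factorization hpp hn).1 (hf p hpp hdvd)

lemma decomp {k n : ℕ} (hk : 2 ≤ k) (hn : n ≠ 0) (hf : IsKFull k n) :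
    qpart k n ^ k * rpart k n = n := by
  conv_rhs => rw [← Nat.factorization_prod_pow_eq_self hn]
  rw [Finsupp.prod, qpart, rpart, ← Finset.prod_pow, ← Finset.prod_mul_distrib]
  refine Finset.prod_congr rfl fun p hp => ?_
  rw [← pow_mul, ← pow_add]
  congr 1
  obtain ⟨c, hc⟩ := beta_spec (show 1 ≤ k by omega) (kfull_exponent hn hf hp)
  have hdiv : (n.factorization p - beta k (n.factorization p)) / k = c := by
    have h1 : n.factorization p - beta k (n.factorization p) = k * c := by omega
    rw [h1, Nat.mul_div_cancel_left _ (show 0 < k by omega)]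
  rw [hdiv, mul_comm]
  omega

lemma rpart_core {k n : ℕ} (hk : 2 ≤ k) (hn : n ≠ 0) (hf : IsKFull k n) :
    IsCore k (rpart k n) := by
  refine ⟨rpart_pos k n, fun p hp => ?_⟩
  have hfact : ∀ q : ℕ, (rpart k n).factorization q
      = if q ∈ n.factorization.support then beta k (n.factorization q) else 0 :=
    factorization_prod_pow _ (fun p hp => support_prime hp) _
  have hne : (rpart k n).factorization p ≠ 0 := by
    simpa using (Finsupp.mem_support_iff.1 hp)
  rw [hfact] at hne ⊢
  by_cases hmem : p ∈ n.factorization.support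
  · rw [if_pos hmem] at hne ⊢
    rcases beta_cases (e := n.factorization p) hk with h0 | hb
    · exact absurd h0 hne
    · constructor
      · exact hb.1
      · have := hb.2; omega
  · rw [if_neg hmem] at hne; exact absurd rfl hne

lemma factorization_pow_mul {k q r : ℕ} (hq : q ≠ 0) (hr : r ≠ 0) (p : ℕ) :
    (q ^ k * r).factorization p = k * q.factorization p + r.factorization p := by
  rw [Nat.factorization_mul (pow_ne_zero _ hq) hr, Nat.factorization_pow]
  simp

lemma kfull_pow_mul {k q r : ℕ} (hk : 2 ≤ k) (hq : q ≠ 0) (hr : IsCore k r) :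
    IsKFull k (q ^ k * r) := by
  intro p hp hdvd
  have hr0 : r ≠ 0 := hr.1.ne'
  have hn0 : q ^ k * r ≠ 0 := mul_ne_zero (pow_ne_zero _ hq) hr0
  rw [Nat.Prime.pow_dvd_iff_le_factorization hp hn0]
  rw [factorization_pow_mul hq hr0]
  have h1 : 1 ≤ (q ^ k * r).factorization p :=
    (Nat.Prime.pow_dvd_iff_le_factorization hp hn0).1 (by simpa using hdvd)
  rw [factorization_pow_mul hq hr0] at h1
  rcases Nat.eq_zero_or_pos (q.factorization p) with h0 | h0
  · rw [h0, Nat.mul_zero, Nat.zero_add] at h1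
    have hpr : p ∈ r.factorization.support := by
      rw [Finsupp.mem_support_iff]; omega
    have := (hr.2 p hpr).1
    omega
  · have : k * 1 ≤ k * q.factorization p := Nat.mul_le_mul_left k h0
    omega

lemma rpart_pow_mul {k q r : ℕ} (hk : 2 ≤ k) (hq : q ≠ 0) (hr : IsCore k r) :
    rpart k (q ^ k * r) = r := by
  have hr0 : r ≠ 0 := hr.1.ne'
  have hn0 : q ^ k * r ≠ 0 := mul_ne_zero (pow_ne_zero _ hq) hr0
  have hsub : r.factorization.support ⊆ (q ^ k * r).factorization.support := by
    intro p hp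
    rw [Finsupp.mem_support_iff] at hp ⊢
    rw [factorization_pow_mul hq hr0]
    omega
  have hstep : ∀ p ∈ (q ^ k * r).factorization.support,
      p ^ beta k ((q ^ k * r).factorization p) = p ^ r.factorization p := by
    intro p hp
    congr 1
    rw [factorization_pow_mul hq hr0]
    refine beta_eval hk ?_
    rcases Nat.eq_zero_or_pos (r.factorization p) with h0 | h0
    · exact Or.inl h0
    · right
      have hpr : p ∈ r.factorization.support := by rw [Finsupp.mem_support_iff]; omega
      have h2k : 2 * k - 1 = k + (k - 1) := by omega
      rw [h2k]
      exact (hr.2 p hpr)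
  rw [rpart, Finset.prod_congr rfl hstep]
  rw [← Finset.prod_subset hsub (fun p _ hpn => ?_)]
  · exact (Nat.factorization_prod_pow_eq_self hr0)
  · rw [Finsupp.notMem_support_iff.1 hpn, pow_zero]

lemma qpart_pow_mul {k q r : ℕ} (hk : 2 ≤ k) (hq : q ≠ 0) (hr : IsCore k r) :
    qpart k (q ^ k * r) = q := by
  have hr0 : r ≠ 0 := hr.1.ne'
  have hfull : IsKFull k (q ^ k * r) := kfull_pow_mul hk hq hr
  have hd := decomp hk (mul_ne_zero (pow_ne_zero _ hq) hr0) hfull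
  rw [rpart_pow_mul hk hq hr] at hd
  have : qpart k (q ^ k * r) ^ k = q ^ k := Nat.eq_of_mul_eq_mul_right hr.1 hd
  exact Nat.pow_left_injective (by omega) this


/-- largest `q ≤ N` with `q ^ k * r ≤ N` -/
def cnt (k N r : ℕ) : ℕ := Nat.findGreatest (fun q => q ^ k * r ≤ N) N

/-- cores up to `N` -/
noncomputable def cores (k N : ℕ) : Finset ℕ := (Finset.Icc 1 N).filter (IsCore k)

lemma cnt_spec {k N r : ℕ} (hk : 1 ≤ k) (hr : 1 ≤ r) (hrN : r ≤ N) :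
    cnt k N r ^ k * r ≤ N := by
  have hN : 1 ≤ N := le_trans hr hrN
  exact Nat.findGreatest_spec (P := fun q => q ^ k * r ≤ N) hN (by simpa using hrN)

lemma le_cnt {k N r q : ℕ} (hk : 1 ≤ k) (hr : 1 ≤ r) (hq : 1 ≤ q)
    (h : q ^ k * r ≤ N) : q ≤ cnt k N r := by
  have hqN : q ≤ N := by
    calc q ≤ q ^ k := Nat.le_self_pow (by omega) q
    _ ≤ q ^ k * r := Nat.le_mul_of_pos_right _ (by omega)
    _ ≤ N := h
  exact Nat.le_findGreatest hqN h

lemma kfull_decomp_set (k N : ℕ) (hk : 2 ≤ k) :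
    (Finset.Icc 1 N).filter (IsKFull k)
      = (cores k N).biUnion
          (fun r => (Finset.Icc 1 (cnt k N r)).image (fun q => q ^ k * r)) := by
  ext n
  simp only [Finset.mem_biUnion, Finset.mem_image, Finset.mem_filter, Finset.mem_Icc, cores]
  constructor
  · rintro ⟨⟨hn1, hnN⟩, hfull⟩
    have hn0 : n ≠ 0 := by omega
    refine ⟨rpart k n, ⟨⟨?_, ?_⟩, rpart_core hk hn0 hfull⟩, qpart k n, ⟨?_, ?_⟩, ?_⟩
    · exact rpart_pos k n
    · calc rpart k n ≤ qpart k n ^ k * rpart k n :=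
            Nat.le_mul_of_pos_left _ (pow_pos (qpart_pos k n) k)
      _ = n := decomp hk hn0 hfull
      _ ≤ N := hnN
    · exact qpart_pos k n
    · refine le_cnt (by omega) (rpart_pos k n) (qpart_pos k n) ?_
      rw [decomp hk hn0 hfull]; exact hnN
    · exact decomp hk hn0 hfull
  · rintro ⟨r, ⟨⟨hr1, hrN⟩, hcore⟩, q, ⟨hq1, hqc⟩, rfl⟩
    have hq0 : q ≠ 0 := by omega
    refine ⟨⟨?_, ?_⟩, kfull_pow_mul hk hq0 hcore⟩
    · exact Nat.one_le_iff_ne_zero.2 (mul_ne_zero (pow_ne_zero _ hq0) (by omega))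
    · calc q ^ k * r ≤ cnt k N r ^ k * r :=
            Nat.mul_le_mul_right r (Nat.pow_le_pow_left hqc k)
      _ ≤ N := cnt_spec (by omega) hr1 hrN

lemma pairwise_disj (k N : ℕ) (hk : 2 ≤ k) :
    (↑(cores k N) : Set ℕ).PairwiseDisjoint
      (fun r => (Finset.Icc 1 (cnt k N r)).image (fun q => q ^ k * r)) := by
  intro r₁ h₁ r₂ h₂ hne
  simp only [cores, Finset.coe_filter, Set.mem_setOf_eq, Finset.mem_Icc] at h₁ h₂
  rw [Function.onFun_apply, Finset.disjoint_left]
  rintro n hn₁ hn₂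
  simp only [Finset.mem_image, Finset.mem_Icc] at hn₁ hn₂
  obtain ⟨q₁, ⟨hq₁, _⟩, he₁⟩ := hn₁
  obtain ⟨q₂, ⟨hq₂, _⟩, he₂⟩ := hn₂
  have e₁ : rpart k n = r₁ := he₁ ▸ rpart_pow_mul hk (by omega) h₁.2
  have e₂ : rpart k n = r₂ := he₂ ▸ rpart_pow_mul hk (by omega) h₂.2
  exact hne (e₁ ▸ e₂)

lemma inj_on_q {k r : ℕ} (hk : 2 ≤ k) (hr : 0 < r) {s : Finset ℕ} :
    Set.InjOn (fun q => q ^ k * r) ↑s := by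
  intro q₁ _ q₂ _ h
  simp only at h
  exact Nat.pow_left_injective (by omega) (Nat.eq_of_mul_eq_mul_right hr h)

lemma sum_kfull (k N : ℕ) (hk : 2 ≤ k) (f : ℕ → ℂ) :
    ∑ n ∈ (Finset.Icc 1 N).filter (IsKFull k), f n
      = ∑ r ∈ cores k N, ∑ q ∈ Finset.Icc 1 (cnt k N r), f (q ^ k * r) := by
  rw [kfull_decomp_set k N hk, Finset.sum_biUnion (pairwise_disj k N hk)]
  refine Finset.sum_congr rfl fun r hr => ?_
  have hr1 : 0 < r := by
    simp only [cores, Finset.mem_filter, Finset.mem_Icc] at hr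
    omega
  rw [Finset.sum_image (inj_on_q hk hr1)]

lemma card_kfull (k N : ℕ) (hk : 2 ≤ k) :
    ((Finset.Icc 1 N).filter (IsKFull k)).card = ∑ r ∈ cores k N, cnt k N r := by
  rw [kfull_decomp_set k N hk, Finset.card_biUnion ?h]
  · refine Finset.sum_congr rfl fun r hr => ?_
    have hr1 : 0 < r := by
      simp only [cores, Finset.mem_filter, Finset.mem_Icc] at hr
      omega
    rw [Finset.card_image_of_injOn (inj_on_q hk hr1), Nat.card_Icc]
    omega
  · intro r₁ h₁ r₂ h₂ hne
    exact pairwise_disj k N hk (Finset.mem_coe.2 h₁) (Finset.mem_coe.2 h₂) hne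


/-- weight function for summability -/
noncomputable def G (k m r : ℕ) : ℝ := if CoreB k m r then (r : ℝ) ^ (-(1 / (k : ℝ))) else 0

lemma G_nonneg (k m r : ℕ) : 0 ≤ G k m r := by
  unfold G; split_ifs
  · positivity
  · exact le_refl 0

lemma coreB_zero {k r : ℕ} (h : CoreB k 0 r) : r = 1 := by
  by_contra hne
  have hr0 : r ≠ 0 := h.1.ne'
  obtain ⟨p, hp, hdvd⟩ := Nat.exists_prime_and_dvd hne
  have hpos : 0 < r.factorization p := hp.factorization_pos_of_dvd hr0 hdvd
  have hmem : p ∈ r.factorization.support := Finsupp.mem_support_iff.2 hpos.ne'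
  have := h.2 p hmem
  omega

lemma core_step {k m r : ℕ} (hk : 2 ≤ k) (h : CoreB k (m + 1) r) :
    ∃ x y : ℕ, 1 ≤ x ∧ x ≤ r ∧ y ≤ r ∧ CoreB k m y ∧ r = x ^ (k + m + 1) * y := by
  have hr0 : r ≠ 0 := h.1.ne'
  set j := k + m + 1 with hj
  set t := r.factorization.support.filter (fun p => r.factorization p = j) with ht
  set x := ∏ p ∈ t, p with hx
  have htprime : ∀ p ∈ t, p.Prime := fun p hp =>
    support_prime (Finset.mem_filter.1 hp).1
  have hxfact : ∀ p, x.factorization p = if p ∈ t then 1 else 0 := by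
    intro p
    have : x = ∏ p ∈ t, p ^ (fun _ => 1) p := by simp [hx]
    rw [this]
    exact factorization_prod_pow t htprime _ p
  have hx0 : x ≠ 0 := (Finset.prod_pos fun p hp => (htprime p hp).pos).ne'
  have hxj0 : x ^ j ≠ 0 := pow_ne_zero _ hx0
  have hxjfact : ∀ p, (x ^ j).factorization p = if p ∈ t then j else 0 := by
    intro p
    rw [Nat.factorization_pow]
    simp only [Finsupp.smul_apply, smul_eq_mul, hxfact p]
    split_ifs <;> ring
  have hdvd : x ^ j ∣ r := by
    rw [← Nat.factorization_le_iff_dvd hxj0 hr0]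
    rw [Finsupp.le_def]
    intro p
    rw [hxjfact p]
    split_ifs with hmem
    · exact le_of_eq ((Finset.mem_filter.1 hmem).2).symm
    · exact Nat.zero_le _
  set y := r / x ^ j with hy
  have hry : r = x ^ j * y := (Nat.mul_div_cancel' hdvd).symm
  have hy0 : y ≠ 0 := by
    intro h0; rw [h0, mul_zero] at hry; exact hr0 hry
  have hyfact : ∀ p, y.factorization p = r.factorization p - (x ^ j).factorization p := by
    intro p
    rw [hy, Nat.factorization_div hdvd]
    simp
  have hycore : CoreB k m y := by
    refine ⟨Nat.pos_of_ne_zero hy0, fun p hp => ?_⟩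
    have hpne : y.factorization p ≠ 0 := Finsupp.mem_support_iff.1 hp
    rw [hyfact p, hxjfact p] at hpne ⊢
    by_cases hmem : p ∈ t
    · rw [if_pos hmem] at hpne
      have := (Finset.mem_filter.1 hmem).2
      omega
    · rw [if_neg hmem] at hpne ⊢
      have hpr : p ∈ r.factorization.support := Finsupp.mem_support_iff.2 (by omega)
      have hb := h.2 p hpr
      have hnej : r.factorization p ≠ j := by
        intro hej
        exact hmem (Finset.mem_filter.2 ⟨hpr, hej⟩)
      omega
  refine ⟨x, y, Nat.pos_of_ne_zero hx0, ?_, ?_, hycore, hry⟩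
  · exact Nat.le_of_dvd (Nat.pos_of_ne_zero hr0)
      (dvd_trans (dvd_pow_self x (by omega)) hdvd)
  · exact Nat.le_of_dvd (Nat.pos_of_ne_zero hr0) ⟨x ^ j, by rw [hry, mul_comm]⟩

lemma rpow_split {x y : ℕ} (k j : ℕ) (hk : 0 < k) :
    ((x ^ j * y : ℕ) : ℝ) ^ (-(1 / (k : ℝ)))
      = (x : ℝ) ^ (-((j : ℝ) / (k : ℝ))) * (y : ℝ) ^ (-(1 / (k : ℝ))) := by
  push_cast
  rw [Real.mul_rpow (by positivity) (by positivity)]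
  congr 1
  rw [← Real.rpow_natCast (x : ℝ) j, ← Real.rpow_mul (by positivity)]
  congr 1
  rw [mul_neg, mul_one_div]

lemma summable_G (k : ℕ) (hk : 2 ≤ k) : ∀ m : ℕ, Summable (G k m) := by
  intro m
  induction m with
  | zero =>
    refine summable_of_ne_finset_zero (s := {1}) fun r hr => ?_
    simp only [Finset.mem_singleton] at hr
    unfold G
    rw [if_neg (fun h => hr (coreB_zero h))]
  | succ m ih =>
    set j := k + m + 1 with hjdef
    set g : ℕ → ℝ := fun x => (x : ℝ) ^ (-((j : ℝ) / (k : ℝ))) with hgdef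
    have hg : Summable g := by
      rw [hgdef]
      refine Real.summable_nat_rpow.2 ?_
      rw [neg_lt, neg_neg]
      rw [lt_div_iff₀ (by positivity)]
      have : (k : ℝ) < (j : ℝ) := by exact_mod_cast (by omega : k < j)
      linarith
    have gnn : ∀ x, 0 ≤ g x := fun x => by rw [hgdef]; positivity
    refine summable_of_sum_range_le (c := (∑' x, g x) * (∑' r, G k m r))
      (G_nonneg k (m + 1)) fun n => ?_
    classical
    set σ : ℕ → ℕ × ℕ := fun r =>
      if h : CoreB k (m + 1) r then
        ((core_step hk h).choose, (core_step hk h).choose_spec.choose)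
      else (0, 0) with hσ
    have hσspec : ∀ r, ∀ h : CoreB k (m + 1) r,
        1 ≤ (σ r).1 ∧ (σ r).1 ≤ r ∧ (σ r).2 ≤ r ∧ CoreB k m (σ r).2
          ∧ r = (σ r).1 ^ j * (σ r).2 := by
      intro r h
      rw [hσ]; simp only [dif_pos h]
      exact (core_step hk h).choose_spec.choose_spec
    set s := (Finset.range n).filter (CoreB k (m + 1)) with hs
    have h1 : ∑ r ∈ Finset.range n, G k (m + 1) r
        = ∑ r ∈ s, ((r : ℝ)) ^ (-(1 / (k : ℝ))) := by
      rw [hs, Finset.sum_filter]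
      exact Finset.sum_congr rfl fun r _ => rfl
    have h2 : ∀ r ∈ s, ((r : ℝ)) ^ (-(1 / (k : ℝ))) = g (σ r).1 * G k m (σ r).2 := by
      intro r hr
      have hcore := (Finset.mem_filter.1 hr).2
      obtain ⟨hx1, hxr, hyr, hycore, heq⟩ := hσspec r hcore
      conv_lhs => rw [heq]
      rw [rpow_split k j (by omega)]
      unfold G
      rw [if_pos hycore]
    have hinj : Set.InjOn σ ↑s := by
      intro r₁ h₁ r₂ h₂ he
      have e₁ := (hσspec r₁ (Finset.mem_filter.1 h₁).2).2.2.2.2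
      have e₂ := (hσspec r₂ (Finset.mem_filter.1 h₂).2).2.2.2.2
      rw [e₁, e₂, he]
    have hsub : s.image σ ⊆ (Finset.range n) ×ˢ (Finset.range n) := by
      intro p hp
      obtain ⟨r, hr, rfl⟩ := Finset.mem_image.1 hp
      have hrn := Finset.mem_range.1 (Finset.mem_filter.1 hr).1
      obtain ⟨hx1, hxr, hyr, _, _⟩ := hσspec r (Finset.mem_filter.1 hr).2
      rw [Finset.mem_product, Finset.mem_range, Finset.mem_range]
      omega
    calc ∑ r ∈ Finset.range n, G k (m + 1) r
        = ∑ r ∈ s, g (σ r).1 * G k m (σ r).2 := by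
          rw [h1]; exact Finset.sum_congr rfl h2
      _ = ∑ p ∈ s.image σ, g p.1 * G k m p.2 :=
          (Finset.sum_image (f := fun p : ℕ × ℕ => g p.1 * G k m p.2)
            (fun a ha b hb h => hinj ha hb h)).symm
      _ ≤ ∑ p ∈ (Finset.range n) ×ˢ (Finset.range n), g p.1 * G k m p.2 :=
          Finset.sum_le_sum_of_subset_of_nonneg hsub
            (fun p _ _ => mul_nonneg (gnn p.1) (G_nonneg k m p.2))
      _ = (∑ x ∈ Finset.range n, g x) * (∑ y ∈ Finset.range n, G k m y) := by
          rw [Finset.sum_product, Finset.sum_mul_sum]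
      _ ≤ (∑' x, g x) * (∑' r, G k m r) := by
          refine mul_le_mul (Summable.sum_le_tsum _ (fun i _ => gnn i) hg)
            (Summable.sum_le_tsum _ (fun i _ => G_nonneg k m i) ih)
            (Finset.sum_nonneg fun i _ => G_nonneg k m i) (tsum_nonneg gnn)


lemma cnt_le_real {k N r : ℕ} (hk : 2 ≤ k) (hr : 1 ≤ r) (hrN : r ≤ N) :
    (cnt k N r : ℝ) ≤ (N : ℝ) ^ (1 / (k : ℝ)) * (r : ℝ) ^ (-(1 / (k : ℝ))) := by
  have hk0 : (0:ℝ) < (k : ℝ) := by positivity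
  rcases Nat.eq_zero_or_pos (cnt k N r) with h0 | h0
  · rw [h0, Nat.cast_zero]; positivity
  · set c := cnt k N r with hc
    have hspec : c ^ k * r ≤ N := cnt_spec (by omega) hr hrN
    have hreal : ((c : ℝ)) ^ (k : ℕ) * (r : ℝ) ≤ (N : ℝ) := by exact_mod_cast hspec
    have hrpos : (0:ℝ) < (r : ℝ) := by exact_mod_cast hr
    have hdiv : ((c : ℝ)) ^ (k : ℕ) ≤ (N : ℝ) / (r : ℝ) := by
      rw [le_div_iff₀ hrpos]; exact hreal
    have hcid : (c : ℝ) = (((c : ℝ)) ^ (k : ℕ)) ^ (1 / (k : ℝ)) := by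
      rw [← Real.rpow_natCast (c : ℝ) k, ← Real.rpow_mul (by positivity)]
      rw [mul_one_div, div_self (ne_of_gt hk0), Real.rpow_one]
    rw [hcid]
    calc (((c : ℝ)) ^ (k : ℕ)) ^ (1 / (k : ℝ))
        ≤ ((N : ℝ) / (r : ℝ)) ^ (1 / (k : ℝ)) :=
          Real.rpow_le_rpow (by positivity) hdiv (by positivity)
      _ = (N : ℝ) ^ (1 / (k : ℝ)) * (r : ℝ) ^ (-(1 / (k : ℝ))) := by
          rw [Real.div_rpow (by positivity) (le_of_lt hrpos),
            Real.rpow_neg (le_of_lt hrpos), div_eq_mul_inv]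

lemma rpow_le_two_cnt_one {k N : ℕ} (hk : 2 ≤ k) (hN : 1 ≤ N) :
    (N : ℝ) ^ (1 / (k : ℝ)) ≤ 2 * (cnt k N 1 : ℝ) := by
  have hk0 : (0:ℝ) < (k : ℝ) := by positivity
  set c := cnt k N 1 with hc
  have hc1 : 1 ≤ c := le_cnt (by omega) le_rfl le_rfl (by simpa using hN)
  have hstep : (N : ℝ) ^ (1 / (k : ℝ)) ≤ (c : ℝ) + 1 := by
    rcases lt_or_ge c N with hlt | hge
    · have hfg : Nat.findGreatest (fun q => q ^ k * 1 ≤ N) N = c := by rw [hc]; rfl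
      have hng := Nat.findGreatest_is_greatest (P := fun q => q ^ k * 1 ≤ N)
        (n := N) (k := c + 1) (by omega) (by omega)
      have hNlt : N < (c + 1) ^ k := by
        simp only [mul_one] at hng; omega
      have hreal : (N : ℝ) ≤ ((c : ℝ) + 1) ^ (k : ℕ) := by
        have : (N:ℝ) < ((c+1 : ℕ) : ℝ) ^ (k:ℕ) := by exact_mod_cast hNlt
        push_cast at this
        linarith
      calc (N : ℝ) ^ (1 / (k : ℝ)) ≤ (((c : ℝ) + 1) ^ (k : ℕ)) ^ (1 / (k : ℝ)) :=
            Real.rpow_le_rpow (by positivity) hreal (by positivity)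
        _ = (c : ℝ) + 1 := by
            rw [← Real.rpow_natCast ((c:ℝ)+1) k, ← Real.rpow_mul (by positivity),
              mul_one_div, div_self (ne_of_gt hk0), Real.rpow_one]
    · calc (N : ℝ) ^ (1 / (k : ℝ)) ≤ (N : ℝ) ^ (1 : ℝ) :=
            Real.rpow_le_rpow_of_exponent_le (by exact_mod_cast hN)
              (by rw [div_le_one hk0]; exact_mod_cast (by omega : 1 ≤ k))
        _ = (N : ℝ) := Real.rpow_one _
        _ ≤ (c : ℝ) + 1 := by
            have : (N : ℝ) ≤ (c : ℝ) := by exact_mod_cast hge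
            linarith
  have : (c : ℝ) + 1 ≤ 2 * (c : ℝ) := by
    have : (1 : ℝ) ≤ (c : ℝ) := by exact_mod_cast hc1
    linarith
  linarith

lemma isCore_one (k : ℕ) : IsCore k 1 := by
  refine ⟨one_pos, fun p hp => ?_⟩
  simp [Nat.factorization_one] at hp

end KFullAux

theorem kfull_average_of_kth_power_invariant_average
    (k : ℕ) (hk : 2 ≤ k)
    (a : ℕ → ℂ) (M : ℝ) (hbd : ∀ n, ‖a n‖ ≤ M) (L : ℂ)
    (havg : Tendsto (fun N : ℕ => (N : ℂ)⁻¹ * ∑ n ∈ Finset.Icc 1 N, a (n ^ k))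
      atTop (nhds L))
    (hinv : ∀ m : ℕ, 0 < m →
      Tendsto (fun N : ℕ => (N : ℂ)⁻¹ * ∑ n ∈ Finset.Icc 1 N, a (n ^ k * m))
        atTop (nhds L)) :
    Tendsto (fun N : ℕ =>
        ((((Finset.Icc 1 N).filter (IsKFull k)).card : ℂ))⁻¹ *
          ∑ n ∈ (Finset.Icc 1 N).filter (IsKFull k), a n)
      atTop (nhds L) := by
  classical
  have hM0 : 0 ≤ M := le_trans (norm_nonneg (a 0)) (hbd 0)
  set C : ℝ := M + ‖L‖ + 1 with hCdef
  have hC0 : 0 < C := by positivity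
  have hFs : Summable (KFullAux.G k (k - 1)) := KFullAux.summable_G k hk (k - 1)
  rw [Metric.tendsto_atTop]
  intro ε hε
  have hεC : 0 < ε / (8 * C) := by positivity
  have htail : Tendsto (fun T : ℕ => ∑' i : ℕ, KFullAux.G k (k - 1) (i + T))
      atTop (𝓝 0) := tendsto_sum_nat_add _
  obtain ⟨T, hT⟩ := (htail.eventually_lt_const hεC).exists
  have key : ∀ r : ℕ, ∃ Q₀ : ℕ, 1 ≤ Q₀ ∧ (0 < r → ∀ Q : ℕ, Q₀ ≤ Q →
      ‖(∑ q ∈ Finset.Icc 1 Q, a (q ^ k * r)) - L * (Q : ℂ)‖ ≤ ε / 8 * Q) := by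
    intro r
    by_cases hr : 0 < r
    · obtain ⟨Q₁, hQ₁⟩ := Metric.tendsto_atTop.1 (hinv r hr) (ε / 8) (by positivity)
      refine ⟨max Q₁ 1, le_max_right _ _, fun _ Q hQ => ?_⟩
      have hQ1 : 1 ≤ Q := le_trans (le_max_right _ _) hQ
      have hd := hQ₁ Q (le_trans (le_max_left _ _) hQ)
      rw [Complex.dist_eq] at hd
      have hQ0 : (Q : ℂ) ≠ 0 := Nat.cast_ne_zero.2 (by omega)
      have hre : (∑ q ∈ Finset.Icc 1 Q, a (q ^ k * r)) - L * (Q : ℂ)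
          = ((Q : ℂ)⁻¹ * ∑ q ∈ Finset.Icc 1 Q, a (q ^ k * r) - L) * (Q : ℂ) := by
        field_simp
      rw [hre, norm_mul]
      have hnq : ‖(Q : ℂ)‖ = (Q : ℝ) := by
        rw [Complex.norm_natCast]
      rw [hnq]
      exact mul_le_mul_of_nonneg_right (le_of_lt hd) (Nat.cast_nonneg Q)
    · exact ⟨1, le_rfl, fun h => absurd h hr⟩
  choose Q0 hQ01 hQ0 using key
  refine ⟨max (max 1 T) ((Finset.Icc 1 T).sup fun r => Q0 r ^ k * r), fun N hN => ?_⟩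
  have hN1 : 1 ≤ N := le_trans (le_trans (le_max_left 1 T) (le_max_left _ _)) hN
  rw [KFullAux.card_kfull k N hk, KFullAux.sum_kfull k N hk a]
  set Dn : ℕ := ∑ r ∈ KFullAux.cores k N, KFullAux.cnt k N r with hDn
  set S : ℂ := ∑ r ∈ KFullAux.cores k N,
      ∑ q ∈ Finset.Icc 1 (KFullAux.cnt k N r), a (q ^ k * r) with hS
  have h1mem : (1 : ℕ) ∈ KFullAux.cores k N := by
    simp only [KFullAux.cores, Finset.mem_filter, Finset.mem_Icc]
    exact ⟨⟨le_rfl, hN1⟩, KFullAux.isCore_one k⟩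
  have hcnt1 : 1 ≤ KFullAux.cnt k N 1 :=
    KFullAux.le_cnt (by omega) le_rfl le_rfl (by simpa using hN1)
  have hDge : KFullAux.cnt k N 1 ≤ Dn :=
    Finset.single_le_sum (f := fun r => KFullAux.cnt k N r)
      (fun i _ => Nat.zero_le _) h1mem
  have hDn1 : 1 ≤ Dn := le_trans hcnt1 hDge
  have hDpos : (0 : ℝ) < (Dn : ℝ) := by
    have : 0 < Dn := hDn1
    exact_mod_cast this
  have hD1 : (N : ℝ) ^ (1 / (k : ℝ)) ≤ 2 * (Dn : ℝ) := by
    refine le_trans (KFullAux.rpow_le_two_cnt_one hk hN1) ?_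
    have h2 : (KFullAux.cnt k N 1 : ℝ) ≤ (Dn : ℝ) := by exact_mod_cast hDge
    linarith
  set sA := (KFullAux.cores k N).filter (fun r => r < T) with hsA
  set sB := (KFullAux.cores k N).filter (fun r => ¬ r < T) with hsB
  have headB : ∀ r ∈ sA,
      ‖(∑ q ∈ Finset.Icc 1 (KFullAux.cnt k N r), a (q ^ k * r))
        - L * (KFullAux.cnt k N r : ℂ)‖ ≤ ε / 8 * (KFullAux.cnt k N r : ℝ) := by
    intro r hr
    obtain ⟨hrc, hrT⟩ := Finset.mem_filter.1 hr
    simp only [KFullAux.cores, Finset.mem_filter, Finset.mem_Icc] at hrc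
    have hr1 : 1 ≤ r := hrc.1.1
    have hmemT : r ∈ Finset.Icc 1 T := Finset.mem_Icc.2 ⟨hr1, by omega⟩
    have hsup : Q0 r ^ k * r ≤ N :=
      le_trans (le_trans (Finset.le_sup (f := fun r => Q0 r ^ k * r) hmemT)
        (le_max_right _ _)) hN
    have hcnt : Q0 r ≤ KFullAux.cnt k N r :=
      KFullAux.le_cnt (by omega) hr1 (hQ01 r) hsup
    exact hQ0 r hr1 _ hcnt
  have tailB : ∀ r ∈ sB,
      ‖(∑ q ∈ Finset.Icc 1 (KFullAux.cnt k N r), a (q ^ k * r))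
        - L * (KFullAux.cnt k N r : ℂ)‖ ≤ C * (KFullAux.cnt k N r : ℝ) := by
    intro r hr
    have hrw : (∑ q ∈ Finset.Icc 1 (KFullAux.cnt k N r), a (q ^ k * r))
        - L * (KFullAux.cnt k N r : ℂ)
        = ∑ q ∈ Finset.Icc 1 (KFullAux.cnt k N r), (a (q ^ k * r) - L) := by
      rw [Finset.sum_sub_distrib, Finset.sum_const, Nat.card_Icc]
      simp [nsmul_eq_mul, mul_comm]
    rw [hrw]
    calc ‖∑ q ∈ Finset.Icc 1 (KFullAux.cnt k N r), (a (q ^ k * r) - L)‖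
        ≤ ∑ q ∈ Finset.Icc 1 (KFullAux.cnt k N r), ‖a (q ^ k * r) - L‖ :=
          norm_sum_le _ _
      _ ≤ ∑ q ∈ Finset.Icc 1 (KFullAux.cnt k N r), C :=
          Finset.sum_le_sum fun q _ => le_trans (norm_sub_le _ _)
            (by rw [hCdef]; have := hbd (q ^ k * r); linarith)
      _ = C * (KFullAux.cnt k N r : ℝ) := by
          rw [Finset.sum_const, Nat.card_Icc, Nat.add_sub_cancel, nsmul_eq_mul]
          ring
  have tailcnt : ∑ r ∈ sB, (KFullAux.cnt k N r : ℝ) ≤ 2 * (Dn : ℝ) * (ε / (8 * C)) := by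
    have step1 : ∀ r ∈ sB, (KFullAux.cnt k N r : ℝ)
        ≤ (N : ℝ) ^ (1 / (k : ℝ)) * KFullAux.G k (k - 1) r := by
      intro r hr
      obtain ⟨hrc, hrT⟩ := Finset.mem_filter.1 hr
      simp only [KFullAux.cores, Finset.mem_filter, Finset.mem_Icc] at hrc
      have hle := KFullAux.cnt_le_real (k := k) (N := N) (r := r) hk hrc.1.1 hrc.1.2
      have hGr : KFullAux.G k (k - 1) r = (r : ℝ) ^ (-(1 / (k : ℝ))) := if_pos hrc.2
      rw [hGr]
      exact hle
    calc ∑ r ∈ sB, (KFullAux.cnt k N r : ℝ)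
        ≤ ∑ r ∈ sB, (N : ℝ) ^ (1 / (k : ℝ)) * KFullAux.G k (k - 1) r :=
          Finset.sum_le_sum step1
      _ = (N : ℝ) ^ (1 / (k : ℝ)) * ∑ r ∈ sB, KFullAux.G k (k - 1) r := by
          rw [← Finset.mul_sum]
      _ ≤ (N : ℝ) ^ (1 / (k : ℝ)) * (∑' i, KFullAux.G k (k - 1) (i + T)) := by
          refine mul_le_mul_of_nonneg_left ?_ (by positivity)
          have hsub : sB ⊆ Finset.Ico T (N + 1) := by
            intro r hr
            obtain ⟨hrc, hrT⟩ := Finset.mem_filter.1 hr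
            simp only [KFullAux.cores, Finset.mem_filter, Finset.mem_Icc] at hrc
            rw [Finset.mem_Ico]
            omega
          calc ∑ r ∈ sB, KFullAux.G k (k - 1) r
              ≤ ∑ r ∈ Finset.Ico T (N + 1), KFullAux.G k (k - 1) r :=
                Finset.sum_le_sum_of_subset_of_nonneg hsub
                  (fun i _ _ => KFullAux.G_nonneg k (k - 1) i)
            _ = ∑ i ∈ Finset.range (N + 1 - T), KFullAux.G k (k - 1) (T + i) := by
                rw [Finset.sum_Ico_eq_sum_range]
            _ = ∑ i ∈ Finset.range (N + 1 - T), KFullAux.G k (k - 1) (i + T) :=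
                Finset.sum_congr rfl (fun i _ => by rw [add_comm])
            _ ≤ ∑' i, KFullAux.G k (k - 1) (i + T) :=
                Summable.sum_le_tsum _ (fun i _ => KFullAux.G_nonneg k (k - 1) _)
                  ((summable_nat_add_iff T).2 hFs)
      _ ≤ (2 * (Dn : ℝ)) * (ε / (8 * C)) := by
          refine mul_le_mul hD1 (le_of_lt hT)
            (tsum_nonneg (fun i => KFullAux.G_nonneg k (k - 1) _)) (by positivity)
  have hmain : ‖S - L * (Dn : ℂ)‖ ≤ ε / 2 * (Dn : ℝ) := by
    have hLD : L * (Dn : ℂ) = ∑ r ∈ KFullAux.cores k N, L * (KFullAux.cnt k N r : ℂ) := by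
      rw [← Finset.mul_sum, hDn]
      push_cast
      ring
    have hSL : S - L * (Dn : ℂ) = ∑ r ∈ KFullAux.cores k N,
        ((∑ q ∈ Finset.Icc 1 (KFullAux.cnt k N r), a (q ^ k * r))
          - L * (KFullAux.cnt k N r : ℂ)) := by
      rw [hS, hLD, Finset.sum_sub_distrib]
    rw [hSL]
    have hA : ∑ r ∈ sA, (KFullAux.cnt k N r : ℝ) ≤ (Dn : ℝ) := by
      have h1 : ∑ r ∈ sA, (KFullAux.cnt k N r : ℝ)
          ≤ ∑ r ∈ KFullAux.cores k N, (KFullAux.cnt k N r : ℝ) :=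
        Finset.sum_le_sum_of_subset_of_nonneg (Finset.filter_subset _ _)
          (fun i _ _ => Nat.cast_nonneg _)
      have h2 : ∑ r ∈ KFullAux.cores k N, (KFullAux.cnt k N r : ℝ) = (Dn : ℝ) := by
        rw [hDn]
        push_cast
        rfl
      linarith
    calc ‖∑ r ∈ KFullAux.cores k N,
        ((∑ q ∈ Finset.Icc 1 (KFullAux.cnt k N r), a (q ^ k * r))
          - L * (KFullAux.cnt k N r : ℂ))‖
        ≤ ∑ r ∈ KFullAux.cores k N,
            ‖(∑ q ∈ Finset.Icc 1 (KFullAux.cnt k N r), a (q ^ k * r))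
              - L * (KFullAux.cnt k N r : ℂ)‖ := norm_sum_le _ _
      _ = (∑ r ∈ sA, ‖(∑ q ∈ Finset.Icc 1 (KFullAux.cnt k N r), a (q ^ k * r))
              - L * (KFullAux.cnt k N r : ℂ)‖)
          + ∑ r ∈ sB, ‖(∑ q ∈ Finset.Icc 1 (KFullAux.cnt k N r), a (q ^ k * r))
              - L * (KFullAux.cnt k N r : ℂ)‖ :=
          (Finset.sum_filter_add_sum_filter_not _ _ _).symm
      _ ≤ (∑ r ∈ sA, ε / 8 * (KFullAux.cnt k N r : ℝ))
          + ∑ r ∈ sB, C * (KFullAux.cnt k N r : ℝ) :=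
          add_le_add (Finset.sum_le_sum headB) (Finset.sum_le_sum tailB)
      _ ≤ ε / 8 * (Dn : ℝ) + C * (2 * (Dn : ℝ) * (ε / (8 * C))) := by
          refine add_le_add ?_ ?_
          · rw [← Finset.mul_sum]
            exact mul_le_mul_of_nonneg_left hA (by positivity)
          · rw [← Finset.mul_sum]
            exact mul_le_mul_of_nonneg_left tailcnt (le_of_lt hC0)
      _ ≤ ε / 2 * (Dn : ℝ) := by
          have hCC : C * (2 * (Dn : ℝ) * (ε / (8 * C))) = ε / 4 * (Dn : ℝ) := by
            field_simp
            ring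
          rw [hCC]
          nlinarith [hDpos, hε]
  rw [dist_eq_norm]
  have hDnc : (Dn : ℂ) ≠ 0 := Nat.cast_ne_zero.2 (by omega)
  have hre : (Dn : ℂ)⁻¹ * S - L = (Dn : ℂ)⁻¹ * (S - L * (Dn : ℂ)) := by
    field_simp
  rw [hre, norm_mul, norm_inv]
  have hnd : ‖(Dn : ℂ)‖ = (Dn : ℝ) := by rw [Complex.norm_natCast]
  rw [hnd]
  calc (Dn : ℝ)⁻¹ * ‖S - L * (Dn : ℂ)‖ ≤ (Dn : ℝ)⁻¹ * (ε / 2 * (Dn : ℝ)) :=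
        mul_le_mul_of_nonneg_left hmain (by positivity)
    _ = ε / 2 := by field_simp
    _ < ε := by linarith
end

section
/- Let k ≥ 2 be an integer and M > 0. There exists a constant C > 0 (depending only on k and M) such that for every a : ℕ → ℂ with |a(n)| ≤ M for all n, every N ≥ 1, and all real numbers D_1, …, D_{k−1} with 1 ≤ D_i ≤ N^{1/((k−1)(k+i))} for each 1 ≤ i ≤ k−1, one has | (1/N^{1/k}) Σ_{n ≤ N, n k-full} a(n) − Σ_{(n_1,…,n_{k−1}) : n_i ≤ D_i, each n_i squarefree, gcd(n_i, n_j) = 1 for i < j} (∏_{i=1}^{k−1} n_i^{−(1+i/k)}) · (1/⌊V⌋) Σ_{m=1}^{⌊V⌋} a(m^k · n_1^{k+1} ⋯ n_{k−1}^{2k−1}) | ≤ C ( Σ_{i=1}^{k−1} D_i^{−i/k} + N^{−1/(k(k+1))} ), where V = N^{1/k} / ∏_{i=1}^{k−1} n_i^{1+i/k}. -/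
open Filter Topology Finset
open scoped Classical

/-- `Vval k N t = N^(1/k) / ∏ i, (t i)^(1 + (i+1)/k)`. -/
noncomputable def Vval (k N : ℕ) (t : Fin (k - 1) → ℕ) : ℝ :=
  (N : ℝ) ^ ((1 : ℝ) / k) / ∏ i : Fin (k - 1), (t i : ℝ) ^ (1 + ((i : ℕ) + 1 : ℝ) / k)

noncomputable def Qr (k : ℕ) (t : Fin (k - 1) → ℕ) : ℝ :=
  ∏ i : Fin (k - 1), (t i : ℝ) ^ (1 + ((i : ℕ) + 1 : ℝ) / k)

def Pn (k : ℕ) (t : Fin (k - 1) → ℕ) : ℕ := ∏ i : Fin (k - 1), t i ^ (k + 1 + (i : ℕ))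

def Good (k : ℕ) (t : Fin (k - 1) → ℕ) : Prop :=
  (∀ i, Squarefree (t i)) ∧ ∀ i j : Fin (k - 1), i < j → Nat.Coprime (t i) (t j)

noncomputable def tOf (k n : ℕ) (i : Fin (k - 1)) : ℕ :=
  ∏ p ∈ n.primeFactors.filter (fun p => n.factorization p % k = (i : ℕ) + 1), p

noncomputable def mOf (k n : ℕ) : ℕ :=
  ∏ p ∈ n.primeFactors,
    p ^ (n.factorization p / k - if n.factorization p % k = 0 then 0 else 1)

lemma Good.coprime {k : ℕ} {t : Fin (k - 1) → ℕ} (hg : Good k t) {i j : Fin (k - 1)}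
    (hij : i ≠ j) : Nat.Coprime (t i) (t j) := by
  rcases lt_or_gt_of_ne hij with h | h
  · exact hg.2 i j h
  · exact (hg.2 j i h).symm

lemma Pn_pos {k : ℕ} {t : Fin (k - 1) → ℕ} (ht : ∀ i, 1 ≤ t i) : 0 < Pn k t :=
  Finset.prod_pos fun i _ => pow_pos (ht i) _

lemma tOf_squarefree (k n : ℕ) (i : Fin (k - 1)) : Squarefree (tOf k n i) := by
  have hprime : ∀ p ∈ n.primeFactors.filter (fun p => n.factorization p % k = (i : ℕ) + 1),
      Nat.Prime p := fun p hp => Nat.prime_of_mem_primeFactors (Finset.mem_filter.1 hp).1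
  have hne : tOf k n i ≠ 0 := Finset.prod_ne_zero_iff.2 fun p hp => (hprime p hp).ne_zero
  rw [Nat.squarefree_iff_factorization_le_one hne]
  intro q
  rw [tOf, Nat.factorization_prod (fun p hp => (hprime p hp).ne_zero)]
  rw [Finsupp.finset_sum_apply]
  have : ∀ p ∈ n.primeFactors.filter (fun p => n.factorization p % k = (i : ℕ) + 1),
      (Nat.factorization p) q = if p = q then 1 else 0 := by
    intro p hp
    rw [(hprime p hp).factorization, Finsupp.single_apply]
  rw [Finset.sum_congr rfl this, Finset.sum_ite_eq' _ q (fun _ => 1)]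
  split <;> simp

lemma tOf_dvd (k n : ℕ) (i : Fin (k - 1)) : tOf k n i ∣ n :=
  (Finset.prod_dvd_prod_of_subset _ _ _ (Finset.filter_subset _ _)).trans
    (Nat.prod_primeFactors_dvd n)

lemma tOf_coprime (k n : ℕ) {i j : Fin (k - 1)} (hij : i ≠ j) :
    Nat.Coprime (tOf k n i) (tOf k n j) := by
  apply Nat.Coprime.prod_left
  intro p hp
  apply Nat.Coprime.prod_right
  intro q hq
  simp only [Finset.mem_filter] at hp hq
  have hpp := Nat.prime_of_mem_primeFactors hp.1
  have hqq := Nat.prime_of_mem_primeFactors hq.1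
  rw [Nat.coprime_primes hpp hqq]
  rintro rfl
  rw [hp.2] at hq
  exact hij (Fin.ext (by omega))

lemma mOf_pos (k n : ℕ) : 0 < mOf k n :=
  Finset.prod_pos fun p hp => pow_pos (Nat.prime_of_mem_primeFactors hp).pos _
lemma fact_comp {k : ℕ} {t : Fin (k - 1) → ℕ} {m : ℕ} (ht : ∀ i, 1 ≤ t i) (hm : 1 ≤ m)
    (p : ℕ) :
    (m ^ k * Pn k t).factorization p
      = k * m.factorization p + ∑ i : Fin (k - 1), (k + 1 + (i : ℕ)) * (t i).factorization p := by
  have h1 : m ^ k ≠ 0 := pow_ne_zero _ (by omega)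
  have h2 : Pn k t ≠ 0 := (Pn_pos ht).ne'
  rw [Nat.factorization_mul h1 h2, Finsupp.add_apply, Nat.factorization_pow,
    Finsupp.smul_apply, smul_eq_mul, Pn,
    Nat.factorization_prod (fun i _ => pow_ne_zero _ (by have := ht i; omega)),
    Finsupp.finset_sum_apply]
  congr 1
  apply Finset.sum_congr rfl
  intro i _
  rw [Nat.factorization_pow, Finsupp.smul_apply, smul_eq_mul]

lemma sf_fact {u : ℕ} (hu : Squarefree u) {p : ℕ} (hp : p.Prime) :
    u.factorization p = if p ∣ u then 1 else 0 := by
  split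
  · next h =>
      have h1 := hu.natFactorization_le_one p
      have h2 := Nat.Prime.factorization_pos_of_dvd hp hu.ne_zero h
      omega
  · next h => exact Nat.factorization_eq_zero_of_not_dvd h

lemma cases_comp {k : ℕ} (hk : 2 ≤ k) {t : Fin (k - 1) → ℕ} {m : ℕ} (hg : Good k t)
    (ht : ∀ i, 1 ≤ t i) (hm : 1 ≤ m) {p : ℕ} (hp : p.Prime) :
    ((∀ i, ¬ p ∣ t i) ∧ (m ^ k * Pn k t).factorization p = k * m.factorization p)
    ∨ ∃ i : Fin (k - 1), p ∣ t i ∧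
        (m ^ k * Pn k t).factorization p = k * (m.factorization p + 1) + ((i : ℕ) + 1) := by
  by_cases h : ∃ i, p ∣ t i
  · obtain ⟨i, hi⟩ := h
    right
    refine ⟨i, hi, ?_⟩
    rw [fact_comp ht hm]
    have hsum : ∑ j : Fin (k - 1), (k + 1 + (j : ℕ)) * (t j).factorization p
        = k + 1 + (i : ℕ) := by
      rw [Finset.sum_eq_single i]
      · rw [sf_fact ((hg.1) i) hp, if_pos hi, mul_one]
      · intro j _ hj
        rw [sf_fact ((hg.1) j) hp, if_neg, mul_zero]
        intro hdvd
        have hcop := hg.coprime hj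
        have hpd : p ∣ Nat.gcd (t j) (t i) := Nat.dvd_gcd hdvd hi
        rw [Nat.Coprime] at hcop
        rw [hcop] at hpd
        exact hp.one_lt.ne' (Nat.eq_one_of_dvd_one hpd)
      · simp
    rw [hsum]; ring
  · left
    push_neg at h
    refine ⟨h, ?_⟩
    rw [fact_comp ht hm]
    have hsum : ∑ j : Fin (k - 1), (k + 1 + (j : ℕ)) * (t j).factorization p = 0 := by
      apply Finset.sum_eq_zero
      intro j _
      rw [sf_fact ((hg.1) j) hp, if_neg (h j), mul_zero]
    rw [hsum, add_zero]
lemma ival_lt {k : ℕ} (hk : 2 ≤ k) (i : Fin (k - 1)) : (i : ℕ) + 1 < k := by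
  have := i.isLt; omega

lemma tOf_comp {k : ℕ} (hk : 2 ≤ k) {t : Fin (k - 1) → ℕ} {m : ℕ} (hg : Good k t)
    (ht : ∀ i, 1 ≤ t i) (hm : 1 ≤ m) (i : Fin (k - 1)) :
    tOf k (m ^ k * Pn k t) i = t i := by
  set n := m ^ k * Pn k t with hn
  have hnne : n ≠ 0 := by
    have := Pn_pos ht
    positivity
  have hset : n.primeFactors.filter (fun p => n.factorization p % k = (i : ℕ) + 1)
      = (t i).primeFactors := by
    ext p
    simp only [Finset.mem_filter, Nat.mem_primeFactors]
    constructor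
    · rintro ⟨⟨hp, _, _⟩, hmod⟩
      rcases cases_comp hk hg ht hm hp with ⟨_, hfac⟩ | ⟨j, hj, hfac⟩
      · rw [hfac, Nat.mul_mod_right] at hmod; omega
      · rw [hfac] at hmod
        have hjlt := ival_lt hk j
        rw [Nat.mul_add_mod, Nat.mod_eq_of_lt hjlt] at hmod
        have hji : j = i := Fin.ext (by omega)
        exact ⟨hp, hji ▸ hj, by have := ht i; omega⟩
    · rintro ⟨hp, hdvd, _⟩
      rcases cases_comp hk hg ht hm hp with ⟨hnone, _⟩ | ⟨j, hj, hfac⟩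
      · exact absurd hdvd (hnone i)
      · have hji : j = i := by
          by_contra hne
          have hcop := hg.coprime hne
          have hpd : p ∣ Nat.gcd (t j) (t i) := Nat.dvd_gcd hj hdvd
          rw [Nat.Coprime] at hcop
          rw [hcop] at hpd
          exact hp.one_lt.ne' (Nat.eq_one_of_dvd_one hpd)
        subst hji
        refine ⟨⟨hp, ?_, hnne⟩, ?_⟩
        · exact dvd_mul_of_dvd_right
            ((hj.trans (dvd_pow_self _ (by omega : k + 1 + (j : ℕ) ≠ 0))).trans
              (Finset.dvd_prod_of_mem (fun i => t i ^ (k + 1 + (i : ℕ)))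
                (Finset.mem_univ j))) _
        · rw [hfac, Nat.mul_add_mod, Nat.mod_eq_of_lt (ival_lt hk j)]
  rw [tOf, hset, Nat.prod_primeFactors_of_squarefree (hg.1 i)]

lemma mOf_comp {k : ℕ} (hk : 2 ≤ k) {t : Fin (k - 1) → ℕ} {m : ℕ} (hg : Good k t)
    (ht : ∀ i, 1 ≤ t i) (hm : 1 ≤ m) :
    mOf k (m ^ k * Pn k t) = m := by
  set n := m ^ k * Pn k t with hn
  have hkpos : 0 < k := by omega
  have hnne : n ≠ 0 := by have := Pn_pos ht; positivity
  have hmm : m ≠ 0 := by omega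
  have key : ∀ p ∈ n.primeFactors,
      p ^ (n.factorization p / k - if n.factorization p % k = 0 then 0 else 1)
        = p ^ m.factorization p := by
    intro p hp
    have hpp := Nat.prime_of_mem_primeFactors hp
    congr 1
    rcases cases_comp hk hg ht hm hpp with ⟨_, hfac⟩ | ⟨j, _, hfac⟩
    · rw [hfac, Nat.mul_mod_right, Nat.mul_div_cancel_left _ hkpos, if_pos rfl, Nat.sub_zero]
    · have hjlt := ival_lt hk j
      rw [hfac, Nat.mul_add_mod, Nat.mod_eq_of_lt hjlt, if_neg (by omega),
        Nat.mul_add_div hkpos, Nat.div_eq_of_lt hjlt]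
      omega
  rw [mOf, Finset.prod_congr rfl key]
  have hsub : m.primeFactors ⊆ n.primeFactors := by
    apply Nat.primeFactors_mono _ hnne
    exact dvd_mul_of_dvd_left (dvd_pow_self m (by omega : k ≠ 0)) _
  rw [← Finset.prod_subset hsub (fun p _ hpn => by
    rw [Nat.factorization_eq_zero_of_not_dvd, pow_zero]
    intro hdvd
    exact hpn (Nat.mem_primeFactors.2 ⟨by
      by_contra hnp
      exact hpn (Nat.mem_primeFactors.2 ⟨absurd hdvd (by simp_all), hdvd, hmm⟩), hdvd, hmm⟩))]
  · conv_rhs => rw [← Nat.factorization_prod_pow_eq_self hmm]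
    rw [Nat.prod_factorization_eq_prod_primeFactors]
lemma recomp {k : ℕ} (hk : 2 ≤ k) {n : ℕ} (hn : n ≠ 0) (hf : IsKFull k n) :
    (mOf k n) ^ k * Pn k (tOf k n) = n := by
  have he : ∀ p ∈ n.primeFactors, k ≤ n.factorization p := by
    intro p hp
    have hpp := Nat.prime_of_mem_primeFactors hp
    exact (Nat.Prime.pow_dvd_iff_le_factorization hpp hn).1
      (hf p hpp (Nat.dvd_of_mem_primeFactors hp))
  have h2 : Pn k (tOf k n) = ∏ p ∈ n.primeFactors,
      (if n.factorization p % k = 0 then 1 else p ^ (k + n.factorization p % k)) := by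
    rw [Pn]
    have hstep : ∀ i : Fin (k - 1), tOf k n i ^ (k + 1 + (i : ℕ))
        = ∏ p ∈ n.primeFactors,
            (if n.factorization p % k = (i : ℕ) + 1 then p ^ (k + 1 + (i : ℕ)) else 1) := by
      intro i
      rw [tOf, ← Finset.prod_pow, Finset.prod_filter]
    rw [Finset.prod_congr rfl (fun i _ => hstep i), Finset.prod_comm]
    apply Finset.prod_congr rfl
    intro p _
    by_cases hr : n.factorization p % k = 0
    · rw [if_pos hr]
      apply Finset.prod_eq_one
      intro i _
      rw [if_neg (by omega)]
    · rw [if_neg hr]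
      have hrlt : n.factorization p % k < k := Nat.mod_lt _ (by omega)
      have hi : n.factorization p % k - 1 < k - 1 := by omega
      rw [Finset.prod_eq_single ⟨n.factorization p % k - 1, hi⟩]
      · rw [if_pos (by simp; omega)]
        congr 1
        simp
        omega
      · intro j _ hj
        rw [if_neg]
        intro hc
        exact hj (Fin.ext (by simp; omega))
      · simp
  rw [h2, mOf, ← Finset.prod_pow, ← Finset.prod_mul_distrib]
  conv_rhs => rw [← Nat.factorization_prod_pow_eq_self hn]
  rw [Nat.prod_factorization_eq_prod_primeFactors]
  apply Finset.prod_congr rfl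
  intro p hp
  have hek := he p hp
  have hq1 : 1 ≤ n.factorization p / k := (Nat.one_le_div_iff (by omega)).2 hek
  have hQe : k * (n.factorization p / k) + n.factorization p % k = n.factorization p :=
    Nat.div_add_mod _ _
  by_cases hr : n.factorization p % k = 0
  · rw [if_pos hr, if_pos hr, mul_one, ← pow_mul, Nat.sub_zero]
    congr 1
    exact Nat.div_mul_cancel (Nat.dvd_of_mod_eq_zero hr)
  · rw [if_neg hr, if_neg hr, ← pow_mul, ← pow_add]
    congr 1
    rw [tsub_mul, one_mul]
    have hQk : k ≤ n.factorization p / k * k := Nat.le_mul_of_pos_left k (by omega)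
    rw [mul_comm k (n.factorization p / k)] at hQe
    omega
lemma comp_kfull {k : ℕ} (hk : 2 ≤ k) {t : Fin (k - 1) → ℕ} {m : ℕ} :
    IsKFull k (m ^ k * Pn k t) := by
  intro p hp hdvd
  rcases (Nat.Prime.dvd_mul hp).1 hdvd with h | h
  · exact dvd_mul_of_dvd_left (pow_dvd_pow_of_dvd (hp.dvd_of_dvd_pow h) k) _
  · obtain ⟨i, _, hpi⟩ := Prime.exists_mem_finset_dvd hp.prime h
    have hti : p ∣ t i := hp.dvd_of_dvd_pow hpi
    exact dvd_mul_of_dvd_right ((pow_dvd_pow_of_dvd hti k).trans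
      ((pow_dvd_pow _ (by omega : k ≤ k + 1 + (i : ℕ))).trans
        (Finset.dvd_prod_of_mem (fun i => t i ^ (k + 1 + (i : ℕ))) (Finset.mem_univ i)))) _

lemma Qr_pos {k : ℕ} {t : Fin (k - 1) → ℕ} (ht : ∀ i, 1 ≤ t i) : 0 < Qr k t :=
  Finset.prod_pos fun i _ => Real.rpow_pos_of_pos (by exact_mod_cast ht i) _

lemma Qr_pow {k : ℕ} (hk : 2 ≤ k) {t : Fin (k - 1) → ℕ} (ht : ∀ i, 1 ≤ t i) :
    Qr k t ^ k = (Pn k t : ℝ) := by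
  rw [Qr, ← Finset.prod_pow, Pn, Nat.cast_prod]
  apply Finset.prod_congr rfl
  intro i _
  have h0 : (0 : ℝ) ≤ (t i : ℝ) := Nat.cast_nonneg _
  rw [← Real.rpow_natCast ((t i : ℝ) ^ (1 + ((i : ℕ) + 1 : ℝ) / k)) k,
    ← Real.rpow_mul h0, Nat.cast_pow, ← Real.rpow_natCast (t i : ℝ) (k + 1 + (i : ℕ))]
  congr 1
  have hkne : (k : ℝ) ≠ 0 := by positivity
  field_simp
  push_cast
  ring

lemma le_V_iff {k : ℕ} (hk : 2 ≤ k) {N : ℕ} (hN : 1 ≤ N) {t : Fin (k - 1) → ℕ}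
    (ht : ∀ i, 1 ≤ t i) (m : ℕ) :
    m ≤ ⌊Vval k N t⌋₊ ↔ m ^ k * Pn k t ≤ N := by
  have hQ := Qr_pos (k := k) ht
  have hNpos : (0 : ℝ) < (N : ℝ) ^ ((1 : ℝ) / k) :=
    Real.rpow_pos_of_pos (by exact_mod_cast hN) _
  have hV : Vval k N t = (N : ℝ) ^ ((1 : ℝ) / k) / Qr k t := rfl
  have hVnn : 0 ≤ Vval k N t := by rw [hV]; positivity
  rw [Nat.le_floor_iff hVnn, hV, le_div_iff₀ hQ]
  have hpow : ((m : ℝ) * Qr k t) ^ k ≤ ((N : ℝ) ^ ((1 : ℝ) / k)) ^ k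
      ↔ (m : ℝ) * Qr k t ≤ (N : ℝ) ^ ((1 : ℝ) / k) := by
    apply pow_le_pow_iff_left₀ (by positivity) (le_of_lt hNpos) (by omega)
  rw [← hpow, mul_pow, Qr_pow hk ht, ← Real.rpow_natCast ((N : ℝ) ^ ((1 : ℝ) / k)) k,
    ← Real.rpow_mul (Nat.cast_nonneg N), one_div,
    inv_mul_cancel₀ (by positivity : (k : ℝ) ≠ 0), Real.rpow_one]
  rw [show ((m : ℝ) ^ k * (Pn k t : ℝ) ≤ (N : ℝ)) ↔ ((m ^ k * Pn k t : ℕ) : ℝ) ≤ (N : ℝ) by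
    push_cast; rfl]
  exact Nat.cast_le
lemma tOf_pos (k n : ℕ) (i : Fin (k - 1)) : 1 ≤ tOf k n i :=
  Finset.prod_pos fun p hp =>
    (Nat.prime_of_mem_primeFactors (Finset.mem_filter.1 hp).1).pos

lemma sum_kfull {k : ℕ} (hk : 2 ≤ k) (a : ℕ → ℂ) {N : ℕ} (hN : 1 ≤ N) :
    ∑ n ∈ (Finset.Icc 1 N).filter (IsKFull k), a n
      = ∑ t ∈ (Fintype.piFinset fun _ : Fin (k - 1) => Finset.Icc 1 N).filter (Good k),
          ∑ m ∈ Finset.Icc 1 ⌊Vval k N t⌋₊, a (m ^ k * Pn k t) := by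
  rw [Finset.sum_sigma' ((Fintype.piFinset fun _ : Fin (k - 1) => Finset.Icc 1 N).filter
    (Good k)) (fun t => Finset.Icc 1 ⌊Vval k N t⌋₊) (fun t m => a (m ^ k * Pn k t))]
  apply Finset.sum_nbij' (i := fun n => (⟨tOf k n, mOf k n⟩ :
      Σ _t : Fin (k - 1) → ℕ, ℕ)) (j := fun x => x.2 ^ k * Pn k x.1)
  · intro n hn
    simp only [Finset.mem_filter, Finset.mem_Icc] at hn
    obtain ⟨⟨hn1, hnN⟩, hfull⟩ := hn
    have hnne : n ≠ 0 := by omega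
    have htpos : ∀ i, 1 ≤ tOf k n i := tOf_pos k n
    have hgood : Good k (tOf k n) :=
      ⟨fun i => tOf_squarefree k n i, fun i j hij => tOf_coprime k n (Fin.ne_of_lt hij)⟩
    refine Finset.mem_sigma.2 ⟨Finset.mem_filter.2 ⟨Fintype.mem_piFinset.2 fun i => ?_, hgood⟩,
      ?_⟩
    · exact Finset.mem_Icc.2 ⟨htpos i, (Nat.le_of_dvd (by omega) (tOf_dvd k n i)).trans hnN⟩
    · refine Finset.mem_Icc.2 ⟨mOf_pos k n, ?_⟩
      rw [le_V_iff hk hN htpos, recomp hk hnne hfull]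
      exact hnN
  · rintro ⟨t, m⟩ hx
    simp only [Finset.mem_sigma, Finset.mem_filter, Fintype.mem_piFinset, Finset.mem_Icc] at hx
    obtain ⟨⟨hmem, hgood⟩, hm1, hmV⟩ := hx
    have htpos : ∀ i, 1 ≤ t i := fun i => (hmem i).1
    refine Finset.mem_filter.2 ⟨Finset.mem_Icc.2 ⟨?_, ?_⟩, comp_kfull hk⟩
    · have := Pn_pos htpos
      exact Nat.one_le_iff_ne_zero.2 (by positivity)
    · exact (le_V_iff hk hN htpos m).1 hmV
  · intro n hn
    simp only [Finset.mem_filter, Finset.mem_Icc] at hn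
    exact recomp hk (by omega) hn.2
  · rintro ⟨t, m⟩ hx
    simp only [Finset.mem_sigma, Finset.mem_filter, Fintype.mem_piFinset, Finset.mem_Icc] at hx
    obtain ⟨⟨hmem, hgood⟩, hm1, hmV⟩ := hx
    have htpos : ∀ i, 1 ≤ t i := fun i => (hmem i).1
    exact Sigma.ext (by funext; exact tOf_comp hk hgood htpos hm1 _)
      (by simp only []; exact heq_of_eq (mOf_comp hk hgood htpos hm1))
  · intro n hn
    simp only [Finset.mem_filter, Finset.mem_Icc] at hn
    rw [recomp hk (by omega) hn.2]
lemma bern_step {b c : ℝ} (hb : 1 ≤ b) (hc0 : 0 < c) (hc1 : c ≤ 1) :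
    c * (b + 1) ^ (-(1 + c)) ≤ b ^ (-c) - (b + 1) ^ (-c) := by
  have hb1 : (0 : ℝ) < b + 1 := by linarith
  have hbpos : (0 : ℝ) < b := by linarith
  set x : ℝ := 1 / (b + 1) with hx
  have hx0 : 0 < x := by positivity
  have hxhalf : x ≤ 1 / 2 := by
    rw [hx, div_le_div_iff₀ hb1 (by norm_num)]
    linarith
  have hbx : b = (b + 1) * (1 - x) := by
    rw [hx]; field_simp; ring
  have hcx : c * x < 1 := by nlinarith
  have hbern : (1 - x) ^ c ≤ 1 - c * x := by
    have h := rpow_one_add_le_one_add_mul_self (s := -x) (by linarith) (le_of_lt hc0) hc1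
    rw [show (1 : ℝ) - x = 1 + -x by ring]
    linarith [h]
  have h1x : (0 : ℝ) < 1 - x := by linarith
  have hpowpos : (0 : ℝ) < (1 - x) ^ c := Real.rpow_pos_of_pos h1x c
  have h3 : 1 + c * x ≤ 1 / (1 - c * x) := by
    rw [le_div_iff₀ (by nlinarith)]
    nlinarith [sq_nonneg (c * x), mul_pos hc0 hx0]
  have h4 : 1 / (1 - c * x) ≤ 1 / ((1 - x) ^ c) :=
    one_div_le_one_div_of_le hpowpos hbern
  have hkey : 1 + c * x ≤ (1 - x) ^ (-c) := by
    rw [Real.rpow_neg (le_of_lt h1x), ← one_div]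
    linarith
  have hsplit : b ^ (-c) = (b + 1) ^ (-c) * (1 - x) ^ (-c) := by
    conv_lhs => rw [hbx]
    rw [Real.mul_rpow (le_of_lt hb1) (le_of_lt h1x)]
  have hsplit2 : (b + 1) ^ (-(1 + c)) = (b + 1) ^ (-c) * x := by
    rw [show -(1 + c) = -c + -1 by ring, Real.rpow_add hb1, Real.rpow_neg_one, hx]
    ring
  have hQ : (0 : ℝ) < (b + 1) ^ (-c) := Real.rpow_pos_of_pos hb1 _
  rw [hsplit, hsplit2]
  calc c * ((b + 1) ^ (-c) * x) = (b + 1) ^ (-c) * (c * x) := by ring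
    _ ≤ (b + 1) ^ (-c) * ((1 - x) ^ (-c) - 1) := by
        apply mul_le_mul_of_nonneg_left (by linarith) (le_of_lt hQ)
    _ = (b + 1) ^ (-c) * (1 - x) ^ (-c) - (b + 1) ^ (-c) := by ring

lemma tail_sum {c : ℝ} (hc0 : 0 < c) (hc1 : c ≤ 1) (m : ℕ) (hm : 1 ≤ m) (X : ℕ) :
    ∑ n ∈ Finset.Icc (m + 1) X, ((n : ℝ)) ^ (-(1 + c)) ≤ (m : ℝ) ^ (-c) / c := by
  have key : ∀ X : ℕ, ∑ n ∈ Finset.Icc (m + 1) X, ((n : ℝ)) ^ (-(1 + c))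
      ≤ ((m : ℝ) ^ (-c) - (max (m : ℝ) (X : ℝ)) ^ (-c)) / c := by
    intro X
    induction X with
    | zero =>
        rw [Finset.Icc_eq_empty (by omega), Finset.sum_empty,
          max_eq_left (Nat.cast_le.2 (Nat.zero_le m))]
        simp
    | succ X ih =>
        by_cases hXm : X + 1 ≤ m
        · rw [Finset.Icc_eq_empty (by omega), Finset.sum_empty,
            max_eq_left (by exact_mod_cast hXm)]
          simp
        · push_neg at hXm
          have hmX : m ≤ X := by omega
          rw [Finset.sum_Icc_succ_top (by omega : m + 1 ≤ X + 1)]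
          have hXr : (1 : ℝ) ≤ (X : ℝ) := by exact_mod_cast le_trans hm hmX
          have hstep := bern_step (b := (X : ℝ)) hXr hc0 hc1
          rw [max_eq_right (by exact_mod_cast hmX : (m : ℝ) ≤ (X : ℝ))] at ih
          rw [max_eq_right (by exact_mod_cast (by omega : m ≤ X + 1) : (m : ℝ) ≤ ((X + 1 : ℕ) : ℝ))]
          push_cast
          calc (∑ n ∈ Finset.Icc (m + 1) X, ((n : ℝ)) ^ (-(1 + c)))
                + ((X : ℝ) + 1) ^ (-(1 + c))
              ≤ ((m : ℝ) ^ (-c) - (X : ℝ) ^ (-c)) / c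
                + ((X : ℝ) ^ (-c) - ((X : ℝ) + 1) ^ (-c)) / c := by
                refine add_le_add ih ?_
                rw [le_div_iff₀ hc0, mul_comm]
                exact hstep
            _ = ((m : ℝ) ^ (-c) - ((X : ℝ) + 1) ^ (-c)) / c := by ring
  calc ∑ n ∈ Finset.Icc (m + 1) X, ((n : ℝ)) ^ (-(1 + c))
      ≤ ((m : ℝ) ^ (-c) - (max (m : ℝ) (X : ℝ)) ^ (-c)) / c := key X
    _ ≤ (m : ℝ) ^ (-c) / c := by
        have h0 : (0 : ℝ) ≤ (max (m : ℝ) (X : ℝ)) ^ (-c) :=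
          Real.rpow_nonneg (le_max_of_le_left (by positivity)) _
        gcongr
        linarith

lemma head_sum {c : ℝ} (hc0 : 0 < c) (hc1 : c ≤ 1) (X : ℕ) :
    ∑ n ∈ Finset.Icc 1 X, ((n : ℝ)) ^ (-(1 + c)) ≤ 1 + 1 / c := by
  by_cases hX : 1 ≤ X
  · have hsplit : Finset.Icc 1 X = insert 1 (Finset.Icc 2 X) := by
      ext n
      simp only [Finset.mem_insert, Finset.mem_Icc]
      omega
    rw [hsplit, Finset.sum_insert (by simp)]
    have h1 : ((1 : ℕ) : ℝ) ^ (-(1 + c)) = 1 := by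
      rw [Nat.cast_one, Real.one_rpow]
    rw [h1]
    have h2 := tail_sum hc0 hc1 1 (le_refl 1) X
    simp only [Nat.cast_one, Real.one_rpow] at h2
    exact add_le_add (le_refl 1) (by simpa using h2)
  · rw [Finset.Icc_eq_empty (by omega), Finset.sum_empty]
    positivity
lemma perI_bound {k : ℕ} (hk : 2 ≤ k) {N : ℕ} (hN : 1 ≤ N) {Di : ℝ} (i : Fin (k - 1))
    (hD2 : Di ≤ (N : ℝ) ^ ((1 : ℝ) / (((k : ℝ) - 1) * ((k : ℝ) + (i : ℕ) + 1)))) (hD1 : 1 ≤ Di) :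
    Di ^ (1 + ((i : ℕ) + 1 : ℝ) / k) ≤ (N : ℝ) ^ ((1 : ℝ) / (((k : ℝ) - 1) * k)) := by
  have hNR : (1 : ℝ) ≤ (N : ℝ) := by exact_mod_cast hN
  have hkR : (0 : ℝ) < k := by positivity
  have hk1 : (1 : ℝ) ≤ (k : ℝ) - 1 := by
    have : (2 : ℝ) ≤ (k : ℝ) := by exact_mod_cast hk
    linarith
  have he : (0 : ℝ) ≤ 1 + ((i : ℕ) + 1 : ℝ) / k := by positivity
  calc Di ^ (1 + ((i : ℕ) + 1 : ℝ) / k)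
      ≤ ((N : ℝ) ^ ((1 : ℝ) / (((k : ℝ) - 1) * ((k : ℝ) + (i : ℕ) + 1))))
          ^ (1 + ((i : ℕ) + 1 : ℝ) / k) :=
        Real.rpow_le_rpow (by linarith) hD2 he
    _ = (N : ℝ) ^ (((1 : ℝ) / (((k : ℝ) - 1) * ((k : ℝ) + (i : ℕ) + 1)))
          * (1 + ((i : ℕ) + 1 : ℝ) / k)) := by
        rw [← Real.rpow_mul (by positivity)]
    _ = (N : ℝ) ^ ((1 : ℝ) / (((k : ℝ) - 1) * k)) := by
        congr 1
        have h1 : ((k : ℝ) - 1) ≠ 0 := by linarith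
        have h2 : ((k : ℝ) + (i : ℕ) + 1) ≠ 0 := by positivity
        have h3 : (k : ℝ) ≠ 0 := by positivity
        field_simp
        ring

lemma Q_le_rho {k : ℕ} (hk : 2 ≤ k) {N : ℕ} (hN : 1 ≤ N) {D : Fin (k - 1) → ℝ}
    (hD : ∀ i : Fin (k - 1), 1 ≤ D i ∧
      D i ≤ (N : ℝ) ^ ((1 : ℝ) / (((k : ℝ) - 1) * ((k : ℝ) + (i : ℕ) + 1))))
    {t : Fin (k - 1) → ℕ} (ht : ∀ i, t i ∈ Finset.Icc 1 ⌊D i⌋₊) :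
    Qr k t ≤ (N : ℝ) ^ ((1 : ℝ) / k) := by
  have hNR : (1 : ℝ) ≤ (N : ℝ) := by exact_mod_cast hN
  have hkR : (0 : ℝ) < k := by positivity
  have hk1 : (1 : ℝ) ≤ (k : ℝ) - 1 := by
    have : (2 : ℝ) ≤ (k : ℝ) := by exact_mod_cast hk
    linarith
  have hstep : ∀ i : Fin (k - 1), (t i : ℝ) ^ (1 + ((i : ℕ) + 1 : ℝ) / k)
      ≤ (N : ℝ) ^ ((1 : ℝ) / (((k : ℝ) - 1) * k)) := by
    intro i
    have hti : (t i : ℝ) ≤ D i := by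
      have h1 := (Finset.mem_Icc.1 (ht i)).2
      calc (t i : ℝ) ≤ (⌊D i⌋₊ : ℝ) := by exact_mod_cast h1
        _ ≤ D i := Nat.floor_le (by linarith [(hD i).1])
    calc (t i : ℝ) ^ (1 + ((i : ℕ) + 1 : ℝ) / k)
        ≤ (D i) ^ (1 + ((i : ℕ) + 1 : ℝ) / k) :=
          Real.rpow_le_rpow (by positivity) hti (by positivity)
      _ ≤ (N : ℝ) ^ ((1 : ℝ) / (((k : ℝ) - 1) * k)) :=
          perI_bound hk hN i (hD i).2 (hD i).1
  calc Qr k t ≤ ∏ _i : Fin (k - 1), (N : ℝ) ^ ((1 : ℝ) / (((k : ℝ) - 1) * k)) :=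
        Finset.prod_le_prod (fun i _ => Real.rpow_nonneg (Nat.cast_nonneg _) _)
          (fun i _ => hstep i)
    _ = ((N : ℝ) ^ ((1 : ℝ) / (((k : ℝ) - 1) * k))) ^ (k - 1 : ℕ) := by
        rw [Finset.prod_const, Finset.card_univ, Fintype.card_fin]
    _ = (N : ℝ) ^ ((1 : ℝ) / k) := by
        rw [← Real.rpow_natCast ((N : ℝ) ^ ((1 : ℝ) / (((k : ℝ) - 1) * k))) (k - 1),
          ← Real.rpow_mul (by positivity)]
        congr 1
        have hcast : ((k - 1 : ℕ) : ℝ) = (k : ℝ) - 1 := by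
          have : (1 : ℕ) ≤ k := by omega
          push_cast [this]
          ring
        rw [hcast]
        field_simp

lemma prodD_le {k : ℕ} (hk : 2 ≤ k) {N : ℕ} (hN : 1 ≤ N) {D : Fin (k - 1) → ℝ}
    (hD : ∀ i : Fin (k - 1), 1 ≤ D i ∧
      D i ≤ (N : ℝ) ^ ((1 : ℝ) / (((k : ℝ) - 1) * ((k : ℝ) + (i : ℕ) + 1)))) :
    ∏ i : Fin (k - 1), D i ≤ (N : ℝ) ^ ((1 : ℝ) / ((k : ℝ) + 1)) := by
  have hNR : (1 : ℝ) ≤ (N : ℝ) := by exact_mod_cast hN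
  have hkR : (0 : ℝ) < k := by positivity
  have hk1 : (1 : ℝ) ≤ (k : ℝ) - 1 := by
    have : (2 : ℝ) ≤ (k : ℝ) := by exact_mod_cast hk
    linarith
  calc ∏ i : Fin (k - 1), D i
      ≤ ∏ _i : Fin (k - 1), (N : ℝ) ^ ((1 : ℝ) / (((k : ℝ) - 1) * ((k : ℝ) + 1))) := by
        apply Finset.prod_le_prod (fun i _ => by linarith [(hD i).1])
        intro i _
        refine le_trans (hD i).2 (Real.rpow_le_rpow_of_exponent_le hNR ?_)
        apply div_le_div_of_nonneg_left (by norm_num) (by positivity)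
        have : ((k : ℝ) + 1) ≤ (k : ℝ) + (i : ℕ) + 1 := by
          have : (0 : ℝ) ≤ (i : ℕ) := Nat.cast_nonneg _
          linarith
        nlinarith
    _ = (N : ℝ) ^ ((1 : ℝ) / ((k : ℝ) + 1)) := by
        rw [Finset.prod_const, Finset.card_univ, Fintype.card_fin,
          ← Real.rpow_natCast ((N : ℝ) ^ ((1 : ℝ) / (((k : ℝ) - 1) * ((k : ℝ) + 1)))) (k - 1),
          ← Real.rpow_mul (by positivity)]
        congr 1
        have hcast : ((k - 1 : ℕ) : ℝ) = (k : ℝ) - 1 := by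
          have : (1 : ℕ) ≤ k := by omega
          push_cast [this]
          ring
        rw [hcast]
        have h1 : ((k : ℝ) - 1) ≠ 0 := by linarith
        have h2 : ((k : ℝ) + 1) ≠ 0 := by positivity
        field_simp
set_option maxHeartbeats 2000000 in
lemma main_est (k : ℕ) (hk : 2 ≤ k) (M : ℝ) (hM : 0 < M) (a : ℕ → ℂ)
    (ha : ∀ n, ‖a n‖ ≤ M) (N : ℕ) (hN : 1 ≤ N) (D : Fin (k - 1) → ℝ)
    (hD : ∀ i : Fin (k - 1), 1 ≤ D i ∧
      D i ≤ (N : ℝ) ^ ((1 : ℝ) / (((k : ℝ) - 1) * ((k : ℝ) + (i : ℕ) + 1)))) :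
    ‖((((N : ℝ) ^ ((1 : ℝ) / k) : ℝ)) : ℂ)⁻¹ *
        (∑ t ∈ (Fintype.piFinset fun _ : Fin (k - 1) => Finset.Icc 1 N).filter (Good k),
          ∑ m ∈ Finset.Icc 1 ⌊Vval k N t⌋₊, a (m ^ k * Pn k t))
      - ∑ t ∈ Fintype.piFinset (fun i : Fin (k - 1) => Finset.Icc 1 ⌊D i⌋₊),
          (if (∀ i, Squarefree (t i)) ∧
              (∀ i j : Fin (k - 1), i < j → Nat.Coprime (t i) (t j)) then
            ((∏ i : Fin (k - 1), ((t i : ℝ) ^ (1 + ((i : ℕ) + 1 : ℝ) / k))⁻¹ : ℝ) : ℂ)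
              * (((⌊Vval k N t⌋₊ : ℕ) : ℂ)⁻¹ *
                  ∑ m ∈ Finset.Icc 1 ⌊Vval k N t⌋₊,
                    a (m ^ k * ∏ i : Fin (k - 1), (t i) ^ (k + 1 + (i : ℕ))))
          else 0)‖
      ≤ ((M + 1) * (2 * k * ((k : ℝ) + 1) ^ k + 1))
          * ((∑ i : Fin (k - 1), (D i) ^ (-(((i : ℕ) + 1 : ℝ)) / k))
            + (N : ℝ) ^ (-(1 : ℝ) / (k * (k + 1)))) := by
  have hkR : (0 : ℝ) < k := by positivity
  have hNR : (1 : ℝ) ≤ (N : ℝ) := by exact_mod_cast hN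
  have hNpos : (0 : ℝ) < (N : ℝ) := by linarith
  have hk2 : (2 : ℝ) ≤ (k : ℝ) := by exact_mod_cast hk
  set ρ : ℝ := (N : ℝ) ^ ((1 : ℝ) / k) with hρdef
  have hρpos : 0 < ρ := Real.rpow_pos_of_pos hNpos _
  set S : (Fin (k - 1) → ℕ) → ℂ :=
    fun t => ∑ m ∈ Finset.Icc 1 ⌊Vval k N t⌋₊, a (m ^ k * Pn k t) with hS
  set F : (Fin (k - 1) → ℕ) → ℂ := fun t =>
    ((∏ i : Fin (k - 1), ((t i : ℝ) ^ (1 + ((i : ℕ) + 1 : ℝ) / k))⁻¹ : ℝ) : ℂ)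
      * (((⌊Vval k N t⌋₊ : ℕ) : ℂ)⁻¹ * S t) with hF
  set T := (Fintype.piFinset fun _ : Fin (k - 1) => Finset.Icc 1 N).filter (Good k) with hT
  set T' := (Fintype.piFinset fun i : Fin (k - 1) => Finset.Icc 1 ⌊D i⌋₊).filter
    (fun t => (∀ i, Squarefree (t i)) ∧
      (∀ i j : Fin (k - 1), i < j → Nat.Coprime (t i) (t j))) with hT'
  have hsecond : (∑ t ∈ Fintype.piFinset (fun i : Fin (k - 1) => Finset.Icc 1 ⌊D i⌋₊),
      (if (∀ i, Squarefree (t i)) ∧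
          (∀ i j : Fin (k - 1), i < j → Nat.Coprime (t i) (t j)) then
        ((∏ i : Fin (k - 1), ((t i : ℝ) ^ (1 + ((i : ℕ) + 1 : ℝ) / k))⁻¹ : ℝ) : ℂ)
          * (((⌊Vval k N t⌋₊ : ℕ) : ℂ)⁻¹ *
              ∑ m ∈ Finset.Icc 1 ⌊Vval k N t⌋₊,
                a (m ^ k * ∏ i : Fin (k - 1), (t i) ^ (k + 1 + (i : ℕ))))
      else 0)) = ∑ t ∈ T', F t := (Finset.sum_filter _ _).symm
  rw [hsecond]
  have hDfloor1 : ∀ i, 1 ≤ ⌊D i⌋₊ := fun i => (Nat.one_le_floor_iff _).2 (hD i).1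
  have hDN : ∀ i, ⌊D i⌋₊ ≤ N := by
    intro i
    have h1 : D i ≤ (N : ℝ) := by
      refine le_trans (hD i).2 ?_
      calc (N : ℝ) ^ ((1 : ℝ) / (((k : ℝ) - 1) * ((k : ℝ) + (i : ℕ) + 1)))
          ≤ (N : ℝ) ^ (1 : ℝ) := by
            apply Real.rpow_le_rpow_of_exponent_le hNR
            have hi0 : (0 : ℝ) ≤ ((i : ℕ) : ℝ) := Nat.cast_nonneg _
            rw [div_le_one (by nlinarith : (0 : ℝ) < ((k : ℝ) - 1) * ((k : ℝ) + (i : ℕ) + 1))]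
            nlinarith
        _ = (N : ℝ) := Real.rpow_one _
    calc ⌊D i⌋₊ ≤ ⌊(N : ℝ)⌋₊ := Nat.floor_le_floor h1
      _ = N := Nat.floor_natCast N
  have hsub : T' ⊆ T := by
    intro t ht
    rw [hT'] at ht
    rw [hT]
    rw [Finset.mem_filter] at ht ⊢
    refine ⟨?_, ht.2⟩
    rw [Fintype.mem_piFinset] at ht ⊢
    intro i
    have h1 := Finset.mem_Icc.1 (ht.1 i)
    exact Finset.mem_Icc.2 ⟨h1.1, le_trans h1.2 (hDN i)⟩
  have hgoodT' : ∀ t ∈ T', Good k t := fun t ht => (Finset.mem_filter.1 ht).2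
  have htposT' : ∀ t ∈ T', ∀ i, 1 ≤ t i := by
    intro t ht i
    exact (Finset.mem_Icc.1 ((Fintype.mem_piFinset.1 (Finset.mem_filter.1 ht).1) i)).1
  have htposT : ∀ t ∈ T, ∀ i, 1 ≤ t i := by
    intro t ht i
    exact (Finset.mem_Icc.1 ((Fintype.mem_piFinset.1 (Finset.mem_filter.1 ht).1) i)).1
  -- decomposition
  have hdecomp : (((ρ : ℝ) : ℂ))⁻¹ * (∑ t ∈ T, S t) - ∑ t ∈ T', F t
      = (∑ t ∈ T', (((ρ : ℝ) : ℂ)⁻¹ * S t - F t)) + ∑ t ∈ T \ T', ((ρ : ℝ) : ℂ)⁻¹ * S t := by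
    rw [← Finset.sum_sdiff hsub, Finset.sum_sub_distrib]
    rw [mul_add, Finset.mul_sum, Finset.mul_sum]
    ring
  rw [hdecomp]
  -- per-term bounds
  have hSbound : ∀ t : Fin (k - 1) → ℕ, ‖S t‖ ≤ M * (⌊Vval k N t⌋₊ : ℝ) := by
    intro t
    calc ‖S t‖ ≤ ∑ m ∈ Finset.Icc 1 ⌊Vval k N t⌋₊, ‖a (m ^ k * Pn k t)‖ := norm_sum_le _ _
      _ ≤ ∑ _m ∈ Finset.Icc 1 ⌊Vval k N t⌋₊, M := Finset.sum_le_sum fun m _ => ha _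
      _ = (⌊Vval k N t⌋₊ : ℝ) * M := by
          rw [Finset.sum_const, Nat.card_Icc, nsmul_eq_mul]
          norm_num
      _ = M * (⌊Vval k N t⌋₊ : ℝ) := mul_comm _ _
  have hperT' : ∀ t ∈ T', ‖((ρ : ℝ) : ℂ)⁻¹ * S t - F t‖ ≤ M * ρ⁻¹ := by
    intro t ht
    have hti : ∀ i, t i ∈ Finset.Icc 1 ⌊D i⌋₊ :=
      fun i => (Fintype.mem_piFinset.1 (Finset.mem_filter.1 ht).1) i
    have htpos := htposT' t ht
    have hQpos : 0 < Qr k t := Qr_pos htpos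
    have hQle : Qr k t ≤ ρ := Q_le_rho hk hN hD hti
    have hVdef : Vval k N t = ρ / Qr k t := rfl
    have hV1 : 1 ≤ Vval k N t := by rw [hVdef, le_div_iff₀ hQpos]; linarith
    have hW1 : 1 ≤ ⌊Vval k N t⌋₊ := (Nat.one_le_floor_iff _).2 hV1
    have hWpos : (0 : ℝ) < (⌊Vval k N t⌋₊ : ℝ) := by exact_mod_cast hW1
    have hWleV : ((⌊Vval k N t⌋₊ : ℕ) : ℝ) ≤ Vval k N t := Nat.floor_le (by linarith)
    have hVltW : Vval k N t < (⌊Vval k N t⌋₊ : ℝ) + 1 := Nat.lt_floor_add_one _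
    set A : ℝ := ρ⁻¹ - (Qr k t)⁻¹ * ((⌊Vval k N t⌋₊ : ℕ) : ℝ)⁻¹ with hA
    have hFt : F t = (((Qr k t)⁻¹ : ℝ) : ℂ) * ((((⌊Vval k N t⌋₊ : ℕ) : ℝ) : ℂ)⁻¹ * S t) := by
      rw [hF]
      simp only [Qr]
      rw [Finset.prod_inv_distrib]
      push_cast
      ring
    have hEq : ((ρ : ℝ) : ℂ)⁻¹ * S t - F t = (A : ℂ) * S t := by
      rw [hFt, hA]
      push_cast
      ring
    have hQV : (Qr k t)⁻¹ = ρ⁻¹ * Vval k N t := by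
      rw [hVdef]
      field_simp
    have hAW : A * ((⌊Vval k N t⌋₊ : ℕ) : ℝ)
        = ρ⁻¹ * (((⌊Vval k N t⌋₊ : ℕ) : ℝ) - Vval k N t) := by
      rw [hA, hQV]
      field_simp
    have habs : |((⌊Vval k N t⌋₊ : ℕ) : ℝ) - Vval k N t| ≤ 1 :=
      abs_le.2 ⟨by linarith, by linarith⟩
    calc ‖((ρ : ℝ) : ℂ)⁻¹ * S t - F t‖ = |A| * ‖S t‖ := by
          rw [hEq, norm_mul, Complex.norm_real, Real.norm_eq_abs]
      _ ≤ |A| * (M * (⌊Vval k N t⌋₊ : ℝ)) :=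
          mul_le_mul_of_nonneg_left (hSbound t) (abs_nonneg _)
      _ = M * (|A| * (⌊Vval k N t⌋₊ : ℝ)) := by ring
      _ = M * |A * ((⌊Vval k N t⌋₊ : ℕ) : ℝ)| := by
          rw [abs_mul, abs_of_pos hWpos]
      _ = M * (ρ⁻¹ * |((⌊Vval k N t⌋₊ : ℕ) : ℝ) - Vval k N t|) := by
          rw [hAW, abs_mul, abs_of_pos (by positivity : (0 : ℝ) < ρ⁻¹)]
      _ ≤ M * (ρ⁻¹ * 1) := by
          apply mul_le_mul_of_nonneg_left _ (le_of_lt hM)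
          exact mul_le_mul_of_nonneg_left habs (by positivity)
      _ = M * ρ⁻¹ := by ring
  have hQinv : ∀ t : Fin (k - 1) → ℕ, (∀ i, 1 ≤ t i) → (Qr k t)⁻¹
      = ∏ i : Fin (k - 1), (t i : ℝ) ^ (-(1 + ((i : ℕ) + 1 : ℝ) / k)) := by
    intro t htpos
    rw [Qr, ← Finset.prod_inv_distrib]
    exact Finset.prod_congr rfl fun i _ =>
      (Real.rpow_neg (Nat.cast_nonneg _) _).symm
  have hperT2 : ∀ t ∈ T \ T', ‖((ρ : ℝ) : ℂ)⁻¹ * S t‖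
      ≤ M * ∏ i : Fin (k - 1), (t i : ℝ) ^ (-(1 + ((i : ℕ) + 1 : ℝ) / k)) := by
    intro t ht
    have htT : t ∈ T := (Finset.mem_sdiff.1 ht).1
    have htpos := htposT t htT
    have hQpos : 0 < Qr k t := Qr_pos htpos
    have hVdef : Vval k N t = ρ / Qr k t := rfl
    have hV0 : 0 ≤ Vval k N t := by rw [hVdef]; positivity
    have hWleV : ((⌊Vval k N t⌋₊ : ℕ) : ℝ) ≤ Vval k N t := Nat.floor_le hV0
    calc ‖((ρ : ℝ) : ℂ)⁻¹ * S t‖ = ρ⁻¹ * ‖S t‖ := by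
          rw [norm_mul, norm_inv, Complex.norm_real, Real.norm_eq_abs, abs_of_pos hρpos]
      _ ≤ ρ⁻¹ * (M * (⌊Vval k N t⌋₊ : ℝ)) :=
          mul_le_mul_of_nonneg_left (hSbound t) (by positivity)
      _ ≤ ρ⁻¹ * (M * Vval k N t) := by
          apply mul_le_mul_of_nonneg_left _ (by positivity : (0 : ℝ) ≤ ρ⁻¹)
          exact mul_le_mul_of_nonneg_left hWleV (le_of_lt hM)
      _ = M * (Qr k t)⁻¹ := by
          rw [hVdef]
          field_simp
      _ = M * ∏ i : Fin (k - 1), (t i : ℝ) ^ (-(1 + ((i : ℕ) + 1 : ℝ) / k)) := by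
          rw [hQinv t htpos]
  -- sum over T'
  have hcardT' : (T'.card : ℝ) ≤ (N : ℝ) ^ ((1 : ℝ) / ((k : ℝ) + 1)) := by
    have h1 : T'.card ≤ ∏ i : Fin (k - 1), ⌊D i⌋₊ := by
      calc T'.card ≤ (Fintype.piFinset (fun i : Fin (k - 1) => Finset.Icc 1 ⌊D i⌋₊)).card :=
            Finset.card_filter_le _ _
        _ = ∏ i : Fin (k - 1), ⌊D i⌋₊ := by
            rw [Fintype.card_piFinset]
            exact Finset.prod_congr rfl fun i _ => by rw [Nat.card_Icc]; omega
    calc (T'.card : ℝ) ≤ ((∏ i : Fin (k - 1), ⌊D i⌋₊ : ℕ) : ℝ) := by exact_mod_cast h1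
      _ = ∏ i : Fin (k - 1), (⌊D i⌋₊ : ℝ) := by push_cast; rfl
      _ ≤ ∏ i : Fin (k - 1), D i :=
          Finset.prod_le_prod (fun i _ => by positivity)
            (fun i _ => Nat.floor_le (by linarith [(hD i).1]))
      _ ≤ (N : ℝ) ^ ((1 : ℝ) / ((k : ℝ) + 1)) := prodD_le hk hN hD
  have hpart1 : ∑ t ∈ T', ‖((ρ : ℝ) : ℂ)⁻¹ * S t - F t‖
      ≤ M * (N : ℝ) ^ (-(1 : ℝ) / (k * (k + 1))) := by
    calc ∑ t ∈ T', ‖((ρ : ℝ) : ℂ)⁻¹ * S t - F t‖ ≤ ∑ _t ∈ T', M * ρ⁻¹ :=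
          Finset.sum_le_sum hperT'
      _ = (T'.card : ℝ) * (M * ρ⁻¹) := by rw [Finset.sum_const, nsmul_eq_mul]
      _ ≤ (N : ℝ) ^ ((1 : ℝ) / ((k : ℝ) + 1)) * (M * ρ⁻¹) := by
          apply mul_le_mul_of_nonneg_right hcardT' (by positivity)
      _ = M * ((N : ℝ) ^ ((1 : ℝ) / ((k : ℝ) + 1)) * ρ⁻¹) := by ring
      _ = M * (N : ℝ) ^ (-(1 : ℝ) / (k * (k + 1))) := by
          congr 1
          rw [hρdef, ← Real.rpow_neg (le_of_lt hNpos), ← Real.rpow_add hNpos]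
          congr 1
          have h3 : (k : ℝ) ≠ 0 := by positivity
          have h4 : (k : ℝ) + 1 ≠ 0 := by positivity
          field_simp
          ring
  have hpart2 : ∑ t ∈ T \ T', ‖((ρ : ℝ) : ℂ)⁻¹ * S t‖
      ≤ (2 * k * ((k : ℝ) + 1) ^ k * M)
        * ∑ i : Fin (k - 1), (D i) ^ (-(((i : ℕ) + 1 : ℝ)) / k) := by
    set g : Fin (k - 1) → ℕ → ℝ :=
      fun i n => (n : ℝ) ^ (-(1 + ((i : ℕ) + 1 : ℝ) / k)) with hg
    have hg0 : ∀ i n, 0 ≤ g i n := fun i n => Real.rpow_nonneg (Nat.cast_nonneg _) _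
    set B : Fin (k - 1) → Finset (Fin (k - 1) → ℕ) := fun i =>
      Fintype.piFinset (fun j => if j = i then Finset.Icc (⌊D i⌋₊ + 1) N
        else Finset.Icc 1 N) with hB
    have hcov : ∀ t ∈ T \ T', ∃ i, t ∈ B i := by
      intro t ht
      obtain ⟨htT, htn⟩ := Finset.mem_sdiff.1 ht
      have htpos := htposT t htT
      have htN : ∀ j, t j ≤ N :=
        fun j => (Finset.mem_Icc.1 ((Fintype.mem_piFinset.1 (Finset.mem_filter.1 htT).1) j)).2
      have hgood : Good k t := (Finset.mem_filter.1 htT).2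
      have hnot : ¬ (∀ i, t i ∈ Finset.Icc 1 ⌊D i⌋₊) := by
        intro hall
        exact htn (Finset.mem_filter.2 ⟨Fintype.mem_piFinset.2 hall, hgood⟩)
      push_neg at hnot
      obtain ⟨i, hi⟩ := hnot
      have hibig : ⌊D i⌋₊ + 1 ≤ t i := by
        rw [Finset.mem_Icc] at hi
        have := htpos i
        omega
      refine ⟨i, Fintype.mem_piFinset.2 fun j => ?_⟩
      by_cases hji : j = i
      · subst hji
        rw [if_pos rfl]
        exact Finset.mem_Icc.2 ⟨hibig, htN j⟩
      · rw [if_neg hji]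
        exact Finset.mem_Icc.2 ⟨htpos j, htN j⟩
    have hcover : ∑ t ∈ T \ T', ∏ j : Fin (k - 1), g j (t j)
        ≤ ∑ i : Fin (k - 1), ∑ t ∈ B i, ∏ j : Fin (k - 1), g j (t j) := by
      calc ∑ t ∈ T \ T', ∏ j : Fin (k - 1), g j (t j)
          ≤ ∑ t ∈ T \ T', ∑ i : Fin (k - 1),
              (if t ∈ B i then ∏ j : Fin (k - 1), g j (t j) else 0) := by
            apply Finset.sum_le_sum
            intro t ht
            obtain ⟨i, hi⟩ := hcov t ht
            calc ∏ j : Fin (k - 1), g j (t j)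
                = (if t ∈ B i then ∏ j : Fin (k - 1), g j (t j) else 0) := (if_pos hi).symm
              _ ≤ ∑ i' : Fin (k - 1),
                  (if t ∈ B i' then ∏ j : Fin (k - 1), g j (t j) else 0) := by
                  apply Finset.single_le_sum (f := fun i' =>
                    (if t ∈ B i' then ∏ j : Fin (k - 1), g j (t j) else 0)) _
                    (Finset.mem_univ i)
                  intro i' _
                  split
                  · exact Finset.prod_nonneg fun j _ => hg0 j (t j)
                  · exact le_refl 0
        _ = ∑ i : Fin (k - 1), ∑ t ∈ T \ T',
              (if t ∈ B i then ∏ j : Fin (k - 1), g j (t j) else 0) := Finset.sum_comm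
        _ ≤ ∑ i : Fin (k - 1), ∑ t ∈ B i, ∏ j : Fin (k - 1), g j (t j) := by
            apply Finset.sum_le_sum
            intro i _
            rw [Finset.sum_ite_mem]
            apply Finset.sum_le_sum_of_subset_of_nonneg (Finset.inter_subset_right)
            intro t _ _
            exact Finset.prod_nonneg fun j _ => hg0 j (t j)
    have hBi : ∀ i : Fin (k - 1), ∑ t ∈ B i, ∏ j : Fin (k - 1), g j (t j)
        ≤ (2 * k * ((k : ℝ) + 1) ^ k) * (D i) ^ (-(((i : ℕ) + 1 : ℝ)) / k) := by
      intro i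
      have hci0 : ∀ j : Fin (k - 1), (0 : ℝ) < ((j : ℕ) + 1 : ℝ) / k := fun j => by positivity
      have hci1 : ∀ j : Fin (k - 1), ((j : ℕ) + 1 : ℝ) / k ≤ 1 := by
        intro j
        rw [div_le_one hkR]
        have : (j : ℕ) + 1 ≤ k := by have := j.isLt; omega
        exact_mod_cast this
      have hHead : ∀ j : Fin (k - 1), ∑ n ∈ Finset.Icc 1 N, g j n ≤ (k : ℝ) + 1 := by
        intro j
        refine le_trans (head_sum (hci0 j) (hci1 j) N) ?_
        have h1 : 1 / (((j : ℕ) + 1 : ℝ) / k) = (k : ℝ) / ((j : ℕ) + 1 : ℝ) := one_div_div _ _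
        have h2 : (k : ℝ) / ((j : ℕ) + 1 : ℝ) ≤ k :=
          div_le_self (by positivity) (by exact_mod_cast Nat.succ_le_succ (Nat.zero_le _))
        rw [h1]
        linarith
      have hTail : ∑ n ∈ Finset.Icc (⌊D i⌋₊ + 1) N, g i n
          ≤ 2 * k * (D i) ^ (-(((i : ℕ) + 1 : ℝ)) / k) := by
        have htail := tail_sum (hci0 i) (hci1 i) ⌊D i⌋₊ (hDfloor1 i) N
        have hDi1 : (1 : ℝ) ≤ D i := (hD i).1
        have hfl2 : D i / 2 ≤ (⌊D i⌋₊ : ℝ) := by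
          rcases le_or_gt (D i) 2 with h | h
          · have : (1 : ℝ) ≤ (⌊D i⌋₊ : ℝ) := by exact_mod_cast hDfloor1 i
            linarith
          · have := Nat.lt_floor_add_one (D i)
            linarith
        set c : ℝ := ((i : ℕ) + 1 : ℝ) / k with hc
        have hc0 : 0 < c := hci0 i
        have hc1 : c ≤ 1 := hci1 i
        have hstep1 : ((⌊D i⌋₊ : ℝ)) ^ (-c) ≤ (D i / 2) ^ (-c) := by
          rw [Real.rpow_neg (by positivity), Real.rpow_neg (by positivity),
            inv_eq_one_div, inv_eq_one_div]
          apply one_div_le_one_div_of_le (Real.rpow_pos_of_pos (by linarith) c)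
          exact Real.rpow_le_rpow (by positivity) hfl2 (le_of_lt hc0)
        have hstep2 : (D i / 2) ^ (-c) ≤ 2 * (D i) ^ (-c) := by
          rw [Real.div_rpow (by linarith) (by norm_num : (0:ℝ) ≤ 2),
            div_eq_mul_inv, ← Real.rpow_neg (by norm_num : (0:ℝ) ≤ 2), neg_neg]
          have h2c : (2 : ℝ) ^ c ≤ 2 := by
            calc (2 : ℝ) ^ c ≤ (2 : ℝ) ^ (1 : ℝ) :=
                  Real.rpow_le_rpow_of_exponent_le (by norm_num) hc1
              _ = 2 := Real.rpow_one 2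
          have hD0 : 0 ≤ (D i) ^ (-c) := Real.rpow_nonneg (by linarith) _
          calc (D i) ^ (-c) * (2 : ℝ) ^ c ≤ (D i) ^ (-c) * 2 :=
                mul_le_mul_of_nonneg_left h2c hD0
            _ = 2 * (D i) ^ (-c) := by ring
        have hinvc : 1 / c ≤ (k : ℝ) := by
          rw [hc, one_div_div]
          exact div_le_self (by positivity) (by exact_mod_cast Nat.succ_le_succ (Nat.zero_le _))
        calc ∑ n ∈ Finset.Icc (⌊D i⌋₊ + 1) N, g i n
            ≤ ((⌊D i⌋₊ : ℝ)) ^ (-c) / c := htail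
          _ = ((⌊D i⌋₊ : ℝ)) ^ (-c) * (1 / c) := by ring
          _ ≤ (2 * (D i) ^ (-c)) * (k : ℝ) := by
              apply mul_le_mul (le_trans hstep1 hstep2) hinvc (by positivity)
              positivity
          _ = 2 * k * (D i) ^ (-c) := by ring
          _ = 2 * k * (D i) ^ (-(((i : ℕ) + 1 : ℝ)) / k) := by rw [neg_div, hc]
      have hfac : ∑ t ∈ B i, ∏ j : Fin (k - 1), g j (t j)
          = ∏ j : Fin (k - 1), ∑ n ∈ (if j = i then Finset.Icc (⌊D i⌋₊ + 1) N
              else Finset.Icc 1 N), g j n := by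
        rw [hB, ← Finset.prod_univ_sum]
      rw [hfac, ← Finset.mul_prod_erase Finset.univ _ (Finset.mem_univ i), if_pos rfl]
      have herase : ∏ j ∈ Finset.univ.erase i,
          ∑ n ∈ (if j = i then Finset.Icc (⌊D i⌋₊ + 1) N else Finset.Icc 1 N), g j n
          ≤ ((k : ℝ) + 1) ^ k := by
        calc ∏ j ∈ Finset.univ.erase i,
            ∑ n ∈ (if j = i then Finset.Icc (⌊D i⌋₊ + 1) N else Finset.Icc 1 N), g j n
            ≤ ∏ _j ∈ Finset.univ.erase i, ((k : ℝ) + 1) := by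
              apply Finset.prod_le_prod
              · intro j _
                exact Finset.sum_nonneg fun n _ => hg0 j n
              · intro j hj
                rw [if_neg (Finset.mem_erase.1 hj).1]
                exact hHead j
          _ = ((k : ℝ) + 1) ^ (Finset.univ.erase i).card := Finset.prod_const _
          _ ≤ ((k : ℝ) + 1) ^ k := by
              apply pow_le_pow_right₀ (by linarith)
              have h1 : (Finset.univ.erase i).card ≤ Finset.univ.card :=
                Finset.card_le_card (Finset.erase_subset _ _)
              have h2 : (Finset.univ : Finset (Fin (k - 1))).card = k - 1 := by
                rw [Finset.card_univ, Fintype.card_fin]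
              omega
      calc (∑ n ∈ Finset.Icc (⌊D i⌋₊ + 1) N, g i n) * ∏ j ∈ Finset.univ.erase i,
            ∑ n ∈ (if j = i then Finset.Icc (⌊D i⌋₊ + 1) N else Finset.Icc 1 N), g j n
          ≤ (2 * k * (D i) ^ (-(((i : ℕ) + 1 : ℝ)) / k)) * (((k : ℝ) + 1) ^ k) := by
            have hDnn : (0 : ℝ) ≤ (D i) ^ (-(((i : ℕ) + 1 : ℝ)) / k) :=
              Real.rpow_nonneg (by linarith [(hD i).1]) _
            apply mul_le_mul hTail herase
            · apply Finset.prod_nonneg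
              intro j _
              exact Finset.sum_nonneg fun n _ => hg0 j n
            · positivity
        _ = (2 * k * ((k : ℝ) + 1) ^ k) * (D i) ^ (-(((i : ℕ) + 1 : ℝ)) / k) := by ring
    calc ∑ t ∈ T \ T', ‖((ρ : ℝ) : ℂ)⁻¹ * S t‖
        ≤ ∑ t ∈ T \ T', M * ∏ j : Fin (k - 1), g j (t j) := Finset.sum_le_sum hperT2
      _ = M * ∑ t ∈ T \ T', ∏ j : Fin (k - 1), g j (t j) := by rw [Finset.mul_sum]
      _ ≤ M * ∑ i : Fin (k - 1), ∑ t ∈ B i, ∏ j : Fin (k - 1), g j (t j) :=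
          mul_le_mul_of_nonneg_left hcover (le_of_lt hM)
      _ ≤ M * ∑ i : Fin (k - 1),
            (2 * k * ((k : ℝ) + 1) ^ k) * (D i) ^ (-(((i : ℕ) + 1 : ℝ)) / k) :=
          mul_le_mul_of_nonneg_left (Finset.sum_le_sum fun i _ => hBi i) (le_of_lt hM)
      _ = (2 * k * ((k : ℝ) + 1) ^ k * M)
          * ∑ i : Fin (k - 1), (D i) ^ (-(((i : ℕ) + 1 : ℝ)) / k) := by
          rw [← Finset.mul_sum]
          ring
  -- combine
  have hDsum0 : 0 ≤ ∑ i : Fin (k - 1), (D i) ^ (-(((i : ℕ) + 1 : ℝ)) / k) :=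
    Finset.sum_nonneg fun i _ => Real.rpow_nonneg (by linarith [(hD i).1]) _
  have hε0 : (0 : ℝ) ≤ (N : ℝ) ^ (-(1 : ℝ) / (k * (k + 1))) := Real.rpow_nonneg (by positivity) _
  have hC1 : M ≤ (M + 1) * (2 * k * ((k : ℝ) + 1) ^ k + 1) := by
    have h1 : (0 : ℝ) ≤ 2 * k * ((k : ℝ) + 1) ^ k := by positivity
    nlinarith
  have hC2 : 2 * k * ((k : ℝ) + 1) ^ k * M ≤ (M + 1) * (2 * k * ((k : ℝ) + 1) ^ k + 1) := by
    have h1 : (0 : ℝ) ≤ 2 * k * ((k : ℝ) + 1) ^ k := by positivity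
    nlinarith
  calc ‖(∑ t ∈ T', (((ρ : ℝ) : ℂ)⁻¹ * S t - F t)) + ∑ t ∈ T \ T', ((ρ : ℝ) : ℂ)⁻¹ * S t‖
      ≤ ‖∑ t ∈ T', (((ρ : ℝ) : ℂ)⁻¹ * S t - F t)‖ + ‖∑ t ∈ T \ T', ((ρ : ℝ) : ℂ)⁻¹ * S t‖ :=
        norm_add_le _ _
    _ ≤ (∑ t ∈ T', ‖((ρ : ℝ) : ℂ)⁻¹ * S t - F t‖)
        + ∑ t ∈ T \ T', ‖((ρ : ℝ) : ℂ)⁻¹ * S t‖ :=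
        add_le_add (norm_sum_le _ _) (norm_sum_le _ _)
    _ ≤ M * (N : ℝ) ^ (-(1 : ℝ) / (k * (k + 1)))
        + (2 * k * ((k : ℝ) + 1) ^ k * M)
          * ∑ i : Fin (k - 1), (D i) ^ (-(((i : ℕ) + 1 : ℝ)) / k) :=
        add_le_add hpart1 hpart2
    _ ≤ ((M + 1) * (2 * k * ((k : ℝ) + 1) ^ k + 1))
          * ((∑ i : Fin (k - 1), (D i) ^ (-(((i : ℕ) + 1 : ℝ)) / k))
            + (N : ℝ) ^ (-(1 : ℝ) / (k * (k + 1)))) := by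
        have h1 := mul_le_mul_of_nonneg_right hC2 hDsum0
        have h2 := mul_le_mul_of_nonneg_right hC1 hε0
        have h3 : ((M + 1) * (2 * k * ((k : ℝ) + 1) ^ k + 1))
              * ((∑ i : Fin (k - 1), (D i) ^ (-(((i : ℕ) + 1 : ℝ)) / k))
                + (N : ℝ) ^ (-(1 : ℝ) / (k * (k + 1))))
            = ((M + 1) * (2 * k * ((k : ℝ) + 1) ^ k + 1))
                * (∑ i : Fin (k - 1), (D i) ^ (-(((i : ℕ) + 1 : ℝ)) / k))
              + ((M + 1) * (2 * k * ((k : ℝ) + 1) ^ k + 1))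
                * (N : ℝ) ^ (-(1 : ℝ) / (k * (k + 1))) := mul_add _ _ _
        linarith
theorem kfull_truncation_estimate (k : ℕ) (hk : 2 ≤ k) (M : ℝ) (hM : 0 < M) :
    ∃ C : ℝ, 0 < C ∧ ∀ (a : ℕ → ℂ), (∀ n, ‖a n‖ ≤ M) →
      ∀ N : ℕ, 1 ≤ N → ∀ D : Fin (k - 1) → ℝ,
      (∀ i : Fin (k - 1), 1 ≤ D i ∧
        D i ≤ (N : ℝ) ^ ((1 : ℝ) / (((k : ℝ) - 1) * ((k : ℝ) + (i : ℕ) + 1)))) →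
      ‖((((N : ℝ) ^ ((1 : ℝ) / k) : ℝ)) : ℂ)⁻¹ *
          (∑ n ∈ (Finset.Icc 1 N).filter (IsKFull k), a n)
        - ∑ t ∈ Fintype.piFinset (fun i : Fin (k - 1) => Finset.Icc 1 ⌊D i⌋₊),
            (if (∀ i, Squarefree (t i)) ∧
                (∀ i j : Fin (k - 1), i < j → Nat.Coprime (t i) (t j)) then
              ((∏ i : Fin (k - 1), ((t i : ℝ) ^ (1 + ((i : ℕ) + 1 : ℝ) / k))⁻¹ : ℝ) : ℂ)
                * (((⌊Vval k N t⌋₊ : ℕ) : ℂ)⁻¹ *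
                    ∑ m ∈ Finset.Icc 1 ⌊Vval k N t⌋₊,
                      a (m ^ k * ∏ i : Fin (k - 1), (t i) ^ (k + 1 + (i : ℕ))))
            else 0)‖
        ≤ C * ((∑ i : Fin (k - 1), (D i) ^ (-(((i : ℕ) + 1 : ℝ)) / k))
            + (N : ℝ) ^ (-(1 : ℝ) / (k * (k + 1)))) := by
  refine ⟨(M + 1) * (2 * k * ((k : ℝ) + 1) ^ k + 1), ?_, ?_⟩
  · have h1 : (0 : ℝ) ≤ 2 * k * ((k : ℝ) + 1) ^ k := by positivity
    nlinarith
  · intro a ha N hN D hD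
    rw [sum_kfull hk a hN]
    exact main_est k hk M hM a ha N hN D hD
end
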